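/- arXiv:1104.0959 — 5 statements merged into one kernel-verified Lean document; each statement's English description precedes it below -/
import Mathlib

section
/- Let ω > 0. A vector f ∈ H belongs to PW_ω(D) if and only if f ∈ Dom(D^k) for every k ∈ ℕ and the supremum sup_{k ∈ ℕ} ( ω^{−k} ‖D^k f‖ ) is finite. -/
open MeasureTheory Complex Filter
open scoped ENNReal Real

set_option linter.unusedSectionVars false

variable {E : Type*} [NormedAddCommGroup E] [InnerProductSpace ℂ E]
  [CompleteSpace E] [SecondCountableTopology E]

/-- The Paley–Wiener space `PW_ω(D)` of all `f ∈ H = L²(μ; E)` whose "spectral transform"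
(the function itself, in the multiplication-operator model of `D`) is supported in `[0, ω]`. -/
def PW {E : Type*} [NormedAddCommGroup E] [InnerProductSpace ℂ E]
    (μ : Measure ℝ) (ω : ℝ) : Set (Lp E 2 μ) :=
  {f | ∀ᵐ x ∂μ, ω < x → f x = 0}

/-!
If `f` vanishes beyond `ω` (and `μ` lives on `[0, ∞)`), then `‖λ^k f‖ ≤ ω^k ‖f‖`. Conversely, if
`‖λ^k f‖ ≤ C ω^k` for all `k`, then for every `a > ω` the norm of `f` on `(a, ∞)` is at most
`C (ω / a)^k`, which tends to `0`; so `f` vanishes on each `(a, ∞)`, hence on `(ω, ∞)`.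
-/

open Topology

section Moments

variable {F : Type*} [NormedAddCommGroup F] [NormedSpace ℝ F] {μ : Measure ℝ} {g : ℝ → F}

lemma ae_norm_pow_smul_le_of_ae_eq_zero {ω : ℝ} (hμ : μ (Set.Iio 0) = 0)
    (hg : ∀ᵐ x ∂μ, ω < x → g x = 0) (k : ℕ) :
    ∀ᵐ x ∂μ, ‖x ^ k • g x‖ ≤ ω ^ k * ‖g x‖ := by
  have hnonneg : ∀ᵐ x ∂μ, 0 ≤ x :=
    ae_iff.2 <| measure_mono_null (fun x (hx : ¬0 ≤ x) => not_le.mp hx) hμ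
  filter_upwards [hg, hnonneg] with x hgx hx
  rcases le_or_gt x ω with hxω | hxω
  · rw [norm_smul, Real.norm_of_nonneg (pow_nonneg hx k)]
    gcongr
  · simp [hgx hxω]

lemma eLpNorm_restrict_Ioi_le {a : ℝ} (ha : 0 < a) (p : ℝ≥0∞) (k : ℕ) :
    eLpNorm g p (μ.restrict (Set.Ioi a)) ≤
      ENNReal.ofReal (a ^ k)⁻¹ * eLpNorm (fun x => x ^ k • g x) p μ := by
  have hpointwise : ∀ᵐ x ∂μ.restrict (Set.Ioi a), ‖g x‖ ≤ (a ^ k)⁻¹ * ‖x ^ k • g x‖ := by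
    filter_upwards [ae_restrict_mem measurableSet_Ioi] with x (hx : a < x)
    rw [norm_smul, Real.norm_of_nonneg (pow_nonneg (ha.trans hx).le k),
      le_inv_mul_iff₀ (pow_pos ha k)]
    gcongr
  calc eLpNorm g p (μ.restrict (Set.Ioi a))
      ≤ ENNReal.ofReal (a ^ k)⁻¹ * eLpNorm (fun x => x ^ k • g x) p (μ.restrict (Set.Ioi a)) :=
        eLpNorm_le_mul_eLpNorm_of_ae_le_mul hpointwise p
    _ ≤ ENNReal.ofReal (a ^ k)⁻¹ * eLpNorm (fun x => x ^ k • g x) p μ := by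
        grw [eLpNorm_restrict_le]

lemma ENNReal.eq_zero_of_forall_le_ofReal_mul_pow {x : ℝ≥0∞} {C r : ℝ} (hr₀ : 0 ≤ r)
    (hr₁ : r < 1) (h : ∀ k : ℕ, x ≤ ENNReal.ofReal (C * r ^ k)) : x = 0 := by
  have hlim : Tendsto (fun k : ℕ => ENNReal.ofReal (C * r ^ k)) atTop (𝓝 0) := by
    simpa using ENNReal.tendsto_ofReal
      ((_root_.tendsto_pow_atTop_nhds_zero_of_lt_one hr₀ hr₁).const_mul C)
  exact le_antisymm (ge_of_tendsto' hlim h) bot_le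

lemma ae_imp_of_forall_lt {ω : ℝ} {P : ℝ → Prop} (h : ∀ a, ω < a → ∀ᵐ x ∂μ, a < x → P x) :
    ∀ᵐ x ∂μ, ω < x → P x := by
  have hrat : ∀ᵐ x ∂μ, ∀ q : ℚ, ω < q → (q : ℝ) < x → P x := by
    refine ae_all_iff.2 fun q => ?_
    by_cases hq : ω < q
    · exact (h q hq).mono fun x hx _ => hx
    · exact Eventually.of_forall fun x hωq => absurd hωq hq
  filter_upwards [hrat] with x hx hωx
  obtain ⟨q, hωq, hqx⟩ := exists_rat_btwn hωx
  exact hx q hωq hqx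

lemma ae_eq_zero_of_eLpNorm_pow_smul_le {p : ℝ≥0∞} (hp : p ≠ 0) (hg : AEStronglyMeasurable g μ)
    {ω C : ℝ} (hω : 0 ≤ ω) (h : ∀ k : ℕ, eLpNorm (fun x => x ^ k • g x) p μ ≤
      ENNReal.ofReal (C * ω ^ k)) :
    ∀ᵐ x ∂μ, ω < x → g x = 0 := by
  refine ae_imp_of_forall_lt fun a hωa => ?_
  have ha : 0 < a := hω.trans_lt hωa
  have hzero : eLpNorm g p (μ.restrict (Set.Ioi a)) = 0 := by
    refine ENNReal.eq_zero_of_forall_le_ofReal_mul_pow (C := C) (by positivity)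
      ((div_lt_one ha).2 hωa) fun k => ?_
    calc eLpNorm g p (μ.restrict (Set.Ioi a))
        ≤ ENNReal.ofReal (a ^ k)⁻¹ * ENNReal.ofReal (C * ω ^ k) := by
          grw [eLpNorm_restrict_Ioi_le ha p k, h k]
      _ = ENNReal.ofReal (C * (ω / a) ^ k) := by
          rw [← ENNReal.ofReal_mul (by positivity), div_pow]
          congr 1
          ring
  rw [eLpNorm_eq_zero_iff hg.restrict hp] at hzero
  exact (ae_restrict_iff' measurableSet_Ioi).1 hzero

end Moments

theorem mem_PW_iff_bddAbove_general
    (μ : Measure ℝ) (hμ : μ (Set.Iio 0) = 0)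
    (ω : ℝ) (hω : 0 < ω) (f : Lp E 2 μ) :
    f ∈ PW (E := E) μ ω ↔
      ∃ hk : ∀ k : ℕ, MemLp (fun x : ℝ => x ^ k • f x) 2 μ,
        ∃ C : ℝ, ∀ k : ℕ, (ω ^ k)⁻¹ * ‖(hk k).toLp _‖ ≤ C := by
  constructor
  · intro hf
    have hbound := ae_norm_pow_smul_le_of_ae_eq_zero hμ hf
    have hk (k : ℕ) := (Lp.memLp f).of_le_mul (by fun_prop) (hbound k)
    refine ⟨hk, ‖f‖, fun k => ?_⟩
    rw [inv_mul_le_iff₀ (pow_pos hω k)]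
    refine Lp.norm_le_mul_norm_of_ae_le_mul ?_
    filter_upwards [(hk k).coeFn_toLp, hbound k] with x hx hxk
    rwa [hx]
  · rintro ⟨hk, C, hC⟩
    refine ae_eq_zero_of_eLpNorm_pow_smul_le two_ne_zero (Lp.aestronglyMeasurable f) hω.le
      (C := C) fun k => ?_
    rw [← Lp.enorm_toLp (hk k), ← ofReal_norm, mul_comm]
    exact ENNReal.ofReal_le_ofReal ((inv_mul_le_iff₀ (pow_pos hω k)).1 (hC k))

/-- Let `ω > 0`. A vector `f ∈ H` belongs to `PW_ω(D)` if and only if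
`f ∈ Dom(D^k)` for every `k ∈ ℕ` and `sup_{k ∈ ℕ} ( ω^{−k} ‖D^k f‖ )` is finite. -/
theorem mem_PW_iff_bddAbove
    (μ : Measure ℝ) [SigmaFinite μ] (hμ : μ (Set.Iio 0) = 0)
    (ω : ℝ) (hω : 0 < ω) (f : Lp E 2 μ) :
    f ∈ PW (E := E) μ ω ↔
      ∃ hk : ∀ k : ℕ, MemLp (fun x : ℝ => x ^ k • f x) 2 μ,
        ∃ C : ℝ, ∀ k : ℕ, (ω ^ k)⁻¹ * ‖(hk k).toLp _‖ ≤ C :=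
  mem_PW_iff_bddAbove_general μ hμ ω hω f
end

section
/- Let f ∈ H and 0 < ω < ∞. Then f belongs to PW_ω(D) with [0,ω] the smallest interval [0,ω'] such that f ∈ PW_{ω'}(D), if and only if f ∈ Dom(D^k) for every k ∈ ℕ and liminf_{k→∞} ‖D^k f‖^{1/k} = ω. -/
/-!
In the multiplication model, `‖D^k f‖ ≤ s^k ‖f‖` when `f` vanishes beyond `s`, while
`‖D^k f‖ ≥ s^k ‖f|_(s,∞)‖` for every `s ≥ 0`. After taking `k`-th roots the constants tend to `1`,
so `‖D^k f‖^{1/k}` is eventually below every `t > s` if `f ∈ PW_s`, and eventually above every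
`t < s` if `f ∉ PW_s`. Hence the liminf is the least `s` with `f ∈ PW_s`. A real `liminf` is `0`
on sequences that are not cobounded, so a nonzero liminf supplies the coboundedness that the
lower bound needs.
-/

open MeasureTheory Complex Filter
open scoped ENNReal Real

set_option linter.unusedSectionVars false

variable {E : Type*} [NormedAddCommGroup E] [InnerProductSpace ℂ E]
  [CompleteSpace E] [SecondCountableTopology E]

open scoped Topology

lemma tendsto_pow_mul_rpow_one_div {s c : ℝ} (hs : 0 ≤ s) (hc : 0 < c) :
    Tendsto (fun k : ℕ => (s ^ k * c) ^ (1 / (k : ℝ))) atTop (𝓝 s) := by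
  have hlim : Tendsto (fun k : ℕ => s * c ^ (1 / (k : ℝ))) atTop (𝓝 s) := by
    simpa using (tendsto_const_nhds.rpow tendsto_one_div_atTop_nhds_zero_nat
      (Or.inl hc.ne')).const_mul s
  refine hlim.congr' ?_
  filter_upwards [eventually_ne_atTop 0] with k hk
  rw [Real.mul_rpow (by positivity) hc.le, ← Real.rpow_natCast, ← Real.rpow_mul hs,
    mul_one_div_cancel (by exact_mod_cast hk), Real.rpow_one]

lemma eventually_rpow_one_div_lt_of_le_pow_mul {N : ℕ → ℝ} {s C t : ℝ} (hN : ∀ k, 0 ≤ N k)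
    (hs : 0 ≤ s) (hC : 0 ≤ C) (hNC : ∀ k, N k ≤ s ^ k * C) (ht : s < t) :
    ∀ᶠ k : ℕ in atTop, N k ^ (1 / (k : ℝ)) < t := by
  filter_upwards [(tendsto_pow_mul_rpow_one_div hs (by linarith : 0 < C + 1)).eventually_lt_const
    ht] with k hk
  refine lt_of_le_of_lt (Real.rpow_le_rpow (hN k) ((hNC k).trans ?_) (by positivity)) hk
  gcongr
  linarith

lemma eventually_lt_rpow_one_div_of_pow_mul_le {N : ℕ → ℝ} {s c t : ℝ} (hs : 0 ≤ s)
    (hc : 0 < c) (hNc : ∀ k, s ^ k * c ≤ N k) (ht : t < s) :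
    ∀ᶠ k : ℕ in atTop, t < N k ^ (1 / (k : ℝ)) := by
  filter_upwards [(tendsto_pow_mul_rpow_one_div hs hc).eventually_const_lt ht] with k hk
  exact hk.trans_le (Real.rpow_le_rpow (by positivity) (hNc k) (by positivity))

lemma Real.isCoboundedUnder_ge_of_liminf_ne_zero {ι : Type*} {l : Filter ι} {u : ι → ℝ}
    (h : liminf u l ≠ 0) : IsCoboundedUnder (· ≥ ·) l u := by
  by_contra hu
  exact h (by rw [liminf_eq]; exact Real.sSup_of_not_bddAbove hu)

section PaleyWiener

variable {μ : Measure ℝ} {f : Lp E 2 μ} {s : ℝ}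

/-- `‖D^k f‖`, with the junk value `0` when `f ∉ Dom(D^k)`. -/
noncomputable def normDPow (f : Lp E 2 μ) (k : ℕ) : ℝ :=
  (eLpNorm (fun x : ℝ => x ^ k • f x) 2 μ).toReal

lemma mem_PW_iff_eLpNorm_restrict_Ioi_eq_zero :
    f ∈ PW μ s ↔ eLpNorm f 2 (μ.restrict (Set.Ioi s)) = 0 := by
  rw [eLpNorm_eq_zero_iff (Lp.aestronglyMeasurable f).restrict two_ne_zero, EventuallyEq,
    ae_restrict_iff' measurableSet_Ioi]
  rfl

lemma mem_PW_of_forall_gt (h : ∀ t, s < t → f ∈ PW μ t) : f ∈ PW μ s := by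
  have hall : ∀ᵐ x ∂μ, ∀ n : ℕ, s + 1 / ((n : ℝ) + 1) < x → f x = 0 :=
    ae_all_iff.2 fun n => h _ (lt_add_of_pos_right _ (by positivity))
  filter_upwards [hall] with x hx hsx
  obtain ⟨n, hn⟩ := exists_nat_one_div_lt (sub_pos.2 hsx)
  exact hx n (by linarith)

lemma norm_pow_smul_le_of_mem_PW (hpos : ∀ᵐ x ∂μ, 0 ≤ x) (hs : 0 ≤ s) (hf : f ∈ PW μ s)
    (k : ℕ) : ∀ᵐ x ∂μ, ‖x ^ k • f x‖ ≤ ‖s ^ k • f x‖ := by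
  filter_upwards [hpos, hf] with x hx hfx
  rcases le_or_gt x s with hxs | hsx
  · rw [norm_smul, norm_smul, Real.norm_of_nonneg (by positivity),
      Real.norm_of_nonneg (by positivity)]
    gcongr
  · simp [hfx hsx]

lemma memLp_pow_smul_of_mem_PW (hpos : ∀ᵐ x ∂μ, 0 ≤ x) (hs : 0 ≤ s) (hf : f ∈ PW μ s)
    (k : ℕ) : MemLp (fun x : ℝ => x ^ k • f x) 2 μ :=
  ((Lp.memLp f).const_smul (s ^ k)).of_le
    ((measurable_id.pow_const k).aestronglyMeasurable.smul (Lp.aestronglyMeasurable f))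
    (norm_pow_smul_le_of_mem_PW hpos hs hf k)

lemma normDPow_le_of_mem_PW (hpos : ∀ᵐ x ∂μ, 0 ≤ x) (hs : 0 ≤ s) (hf : f ∈ PW μ s)
    (k : ℕ) : normDPow f k ≤ s ^ k * ‖f‖ := by
  have hle : eLpNorm (fun x : ℝ => x ^ k • f x) 2 μ ≤ ‖s ^ k‖ₑ * eLpNorm f 2 μ :=
    (eLpNorm_mono_ae (norm_pow_smul_le_of_mem_PW hpos hs hf k)).trans_eq
      (eLpNorm_const_smul (s ^ k) f 2 μ)
  have := ENNReal.toReal_mono (ENNReal.mul_ne_top enorm_ne_top (Lp.eLpNorm_ne_top f)) hle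
  rwa [ENNReal.toReal_mul, toReal_enorm, Real.norm_of_nonneg (by positivity),
    ← Lp.norm_def] at this

lemma pow_mul_eLpNorm_restrict_Ioi_le (hs : 0 ≤ s) (k : ℕ) :
    ‖s ^ k‖ₑ * eLpNorm f 2 (μ.restrict (Set.Ioi s)) ≤
      eLpNorm (fun x : ℝ => x ^ k • f x) 2 μ := by
  have hle : ∀ᵐ x ∂μ.restrict (Set.Ioi s), ‖s ^ k • f x‖ ≤ ‖x ^ k • f x‖ := by
    refine (ae_restrict_iff' measurableSet_Ioi).2 (ae_of_all _ fun x (hsx : s < x) => ?_)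
    rw [norm_smul, norm_smul, Real.norm_of_nonneg (by positivity),
      Real.norm_of_nonneg (pow_nonneg (hs.trans hsx.le) k)]
    gcongr
  calc ‖s ^ k‖ₑ * eLpNorm f 2 (μ.restrict (Set.Ioi s))
      = eLpNorm (fun x : ℝ => s ^ k • f x) 2 (μ.restrict (Set.Ioi s)) :=
        (eLpNorm_const_smul _ _ _ _).symm
    _ ≤ eLpNorm (fun x : ℝ => x ^ k • f x) 2 (μ.restrict (Set.Ioi s)) := eLpNorm_mono_ae hle
    _ ≤ eLpNorm (fun x : ℝ => x ^ k • f x) 2 μ := eLpNorm_mono_measure _ Measure.restrict_le_self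

lemma exists_pos_forall_pow_mul_le_normDPow_of_notMem_PW (hs : 0 ≤ s) (hf : f ∉ PW μ s)
    (hk : ∀ k : ℕ, MemLp (fun x : ℝ => x ^ k • f x) 2 μ) :
    ∃ c > 0, ∀ k, s ^ k * c ≤ normDPow f k := by
  set C := eLpNorm f 2 (μ.restrict (Set.Ioi s))
  have hC : C ≠ ∞ :=
    ((eLpNorm_mono_measure _ Measure.restrict_le_self).trans_lt (Lp.eLpNorm_lt_top f)).ne
  refine ⟨C.toReal, ENNReal.toReal_pos (mt mem_PW_iff_eLpNorm_restrict_Ioi_eq_zero.2 hf) hC,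
    fun k => ?_⟩
  have := ENNReal.toReal_mono (hk k).eLpNorm_ne_top (pow_mul_eLpNorm_restrict_Ioi_le hs k)
  rwa [ENNReal.toReal_mul, toReal_enorm, Real.norm_of_nonneg (by positivity)] at this

lemma eventually_rpow_normDPow_lt_of_mem_PW (hpos : ∀ᵐ x ∂μ, 0 ≤ x) (hs : 0 ≤ s)
    (hf : f ∈ PW μ s) {t : ℝ} (ht : s < t) :
    ∀ᶠ k : ℕ in atTop, normDPow f k ^ (1 / (k : ℝ)) < t :=
  eventually_rpow_one_div_lt_of_le_pow_mul (fun _ => ENNReal.toReal_nonneg) hs (norm_nonneg f)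
    (normDPow_le_of_mem_PW hpos hs hf) ht

lemma isBoundedUnder_ge_rpow_normDPow :
    IsBoundedUnder (· ≥ ·) atTop fun k : ℕ => normDPow f k ^ (1 / (k : ℝ)) :=
  isBoundedUnder_of ⟨0, fun _ => Real.rpow_nonneg ENNReal.toReal_nonneg _⟩

lemma isCoboundedUnder_ge_rpow_normDPow_of_mem_PW (hpos : ∀ᵐ x ∂μ, 0 ≤ x) (hs : 0 ≤ s)
    (hf : f ∈ PW μ s) :
    IsCoboundedUnder (· ≥ ·) atTop fun k : ℕ => normDPow f k ^ (1 / (k : ℝ)) :=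
  (isBoundedUnder_of_eventually_le ((eventually_rpow_normDPow_lt_of_mem_PW hpos hs hf
    (lt_add_one s)).mono fun _ => le_of_lt)).isCoboundedUnder_ge

lemma liminf_rpow_normDPow_le_of_mem_PW (hpos : ∀ᵐ x ∂μ, 0 ≤ x) (hs : 0 ≤ s)
    (hf : f ∈ PW μ s)
    (hcobdd : IsCoboundedUnder (· ≥ ·) atTop fun k : ℕ => normDPow f k ^ (1 / (k : ℝ))) :
    liminf (fun k : ℕ => normDPow f k ^ (1 / (k : ℝ))) atTop ≤ s :=
  (liminf_le_iff hcobdd isBoundedUnder_ge_rpow_normDPow).2 fun _ ht =>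
    (eventually_rpow_normDPow_lt_of_mem_PW hpos hs hf ht).frequently

lemma le_liminf_rpow_normDPow_of_notMem_PW (hs : 0 ≤ s) (hf : f ∉ PW μ s)
    (hk : ∀ k : ℕ, MemLp (fun x : ℝ => x ^ k • f x) 2 μ)
    (hcobdd : IsCoboundedUnder (· ≥ ·) atTop fun k : ℕ => normDPow f k ^ (1 / (k : ℝ))) :
    s ≤ liminf (fun k : ℕ => normDPow f k ^ (1 / (k : ℝ))) atTop := by
  obtain ⟨c, hc, hle⟩ := exists_pos_forall_pow_mul_le_normDPow_of_notMem_PW hs hf hk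
  exact (le_liminf_iff hcobdd isBoundedUnder_ge_rpow_normDPow).2 fun _ ht =>
    eventually_lt_rpow_one_div_of_pow_mul_le hs hc hle ht

end PaleyWiener

theorem mem_PW_min_iff_liminf_general
    (μ : Measure ℝ) (hμ : μ (Set.Iio 0) = 0)
    (f : Lp E 2 μ) (ω : ℝ) (hω : 0 < ω) :
    (f ∈ PW (E := E) μ ω ∧ ∀ ω' : ℝ, 0 < ω' → f ∈ PW (E := E) μ ω' → ω ≤ ω') ↔
      ∃ hk : ∀ k : ℕ, MemLp (fun x : ℝ => x ^ k • f x) 2 μ,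
        Filter.liminf (fun k : ℕ => ‖(hk k).toLp _‖ ^ (1 / (k : ℝ))) atTop = ω := by
  have hpos : ∀ᵐ x ∂μ, 0 ≤ x := by
    rw [ae_iff]
    simp only [not_le]
    exact hμ
  have hnorm (hk : ∀ k : ℕ, MemLp (fun x : ℝ => x ^ k • f x) 2 μ) :
      (fun k : ℕ => ‖(hk k).toLp _‖ ^ (1 / (k : ℝ))) = fun k => normDPow f k ^ (1 / (k : ℝ)) := by
    simp only [Lp.norm_toLp, normDPow]
  constructor
  · rintro ⟨hf, hmin⟩
    have hk := memLp_pow_smul_of_mem_PW hpos hω.le hf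
    have hcobdd := isCoboundedUnder_ge_rpow_normDPow_of_mem_PW hpos hω.le hf
    refine ⟨hk, (hnorm hk).symm ▸ le_antisymm
      (liminf_rpow_normDPow_le_of_mem_PW hpos hω.le hf hcobdd) (le_of_forall_lt fun t ht => ?_)⟩
    obtain ⟨s, hts, hsω⟩ := exists_between (max_lt ht hω)
    have hs : 0 < s := (le_max_right _ _).trans_lt hts
    exact ((le_max_left _ _).trans_lt hts).trans_le (le_liminf_rpow_normDPow_of_notMem_PW hs.le
      (fun hfs => hsω.not_ge (hmin s hs hfs)) hk hcobdd)
  · rintro ⟨hk, hlim⟩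
    rw [hnorm] at hlim
    have hcobdd := Real.isCoboundedUnder_ge_of_liminf_ne_zero (hlim ▸ hω.ne')
    refine ⟨by_contra fun hf => ?_, fun ω' hω' hf' => ?_⟩
    · obtain ⟨s, hωs, hs⟩ : ∃ s, ω < s ∧ f ∉ PW μ s := by
        by_contra! h
        exact hf (mem_PW_of_forall_gt h)
      linarith [le_liminf_rpow_normDPow_of_notMem_PW (hω.le.trans hωs.le) hs hk hcobdd]
    · linarith [liminf_rpow_normDPow_le_of_mem_PW hpos hω'.le hf' hcobdd]

/-- Let `f ∈ H` and `0 < ω < ∞`. Then `f ∈ PW_ω(D)` with `[0, ω]` the smallest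
interval `[0, ω']` such that `f ∈ PW_{ω'}(D)`, if and only if `f ∈ Dom(D^k)` for every
`k ∈ ℕ` and `liminf_{k→∞} ‖D^k f‖^{1/k} = ω`. -/
theorem mem_PW_min_iff_liminf
    (μ : Measure ℝ) [SigmaFinite μ] (hμ : μ (Set.Iio 0) = 0)
    (f : Lp E 2 μ) (ω : ℝ) (hω : 0 < ω) :
    (f ∈ PW (E := E) μ ω ∧ ∀ ω' : ℝ, 0 < ω' → f ∈ PW (E := E) μ ω' → ω ≤ ω') ↔
      ∃ hk : ∀ k : ℕ, MemLp (fun x : ℝ => x ^ k • f x) 2 μ,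
        Filter.liminf (fun k : ℕ => ‖(hk k).toLp _‖ ^ (1 / (k : ℝ))) atTop = ω :=
  mem_PW_min_iff_liminf_general μ hμ f ω hω
end

section
/- Let ω > 0. A vector f ∈ H belongs to PW_ω(D) if and only if for every g ∈ H the scalar function t ↦ ⟨e^{itD} f, g⟩ is bounded on the real line and extends to an entire function F_g : ℂ → ℂ of exponential type ω, i.e. there is a constant C_g with |F_g(z)| ≤ C_g e^{ω |z|} for all z ∈ ℂ and F_g(t) = ⟨e^{itD} f, g⟩ for all real t. -/
open MeasureTheory Complex Filter
open scoped ENNReal Real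

set_option linter.unusedSectionVars false

variable {E : Type*} [NormedAddCommGroup E] [InnerProductSpace ℂ E]
  [CompleteSpace E] [SecondCountableTopology E]

lemma memLp_U (μ : Measure ℝ) (t : ℝ) (f : Lp E 2 μ) :
    MemLp (fun x : ℝ => Complex.exp (Complex.I * t * x) • f x) 2 μ := by
  refine MemLp.of_le (Lp.memLp f) ?_ ?_
  · exact ((Complex.continuous_exp.comp (by fun_prop)).aestronglyMeasurable).smul
      (Lp.aestronglyMeasurable f)
  · filter_upwards with x
    rw [norm_smul]
    simp [Complex.norm_exp]

/-- The unitary (Schrödinger) group `e^{itD}`, acting as `(e^{itD} f)(λ) = e^{itλ} f(λ)`. -/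
noncomputable def Ugrp (μ : Measure ℝ) (t : ℝ) (f : Lp E 2 μ) : Lp E 2 μ :=
  (memLp_U μ t f).toLp _

/-!
The forward direction is elementary: for `f ∈ PW_ω(D)` the matrix coefficient `⟨e^{itD} f, g⟩` is
the Fourier–Laplace transform of the integrable density `λ ↦ ⟨f λ, g λ⟩`, which is supported in
`[0, ω]`.

For the converse take `g = f`: then `F(t) = ∫ e^{-itλ} ‖f λ‖² dμ(λ)` is the Fourier transform of a
positive measure. Phragmén–Lindelöf upgrades boundedness on `ℝ` and exponential type `ω` to
`|F z| ≤ M e^{ω |Im z|}`. Pairing `F` with the Gaussian wave packet `e^{iξt - εt²}` (Fubini) and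
shifting the line of integration to `Im z = (ξ - ω) / 2ε` (Cauchy) gives, for `ξ > ω`,
`∫ e^{-(ξ-λ)²/4ε} ‖f λ‖² dμ(λ) ≤ M e^{-(ξ-ω)²/4ε}`; letting `ε → 0` shows that `‖f‖²` has no mass
near `ξ`.
-/

open Set Topology

noncomputable def fourierLaplace (μ : Measure ℝ) (h : ℝ → ℂ) (z : ℂ) : ℂ :=
  ∫ a, cexp (-(I * z * a)) * h a ∂μ

lemma inner_Ugrp (μ : Measure ℝ) (t : ℝ) (f g : Lp E 2 μ) :
    (inner ℂ (Ugrp μ t f) g : ℂ) = fourierLaplace μ (fun a => inner ℂ (f a) (g a)) t := by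
  rw [L2.inner_def, fourierLaplace]
  refine integral_congr_ae ?_
  filter_upwards [(memLp_U μ t f).coeFn_toLp] with a ha
  rw [Ugrp, ha, inner_smul_left, ← Complex.exp_conj]
  congr 2
  simp

lemma norm_cexp_neg_I_mul (z : ℂ) (a : ℝ) : ‖cexp (-(I * z * a))‖ = Real.exp (z.im * a) := by
  rw [Complex.norm_exp]
  congr 1
  simp [Complex.mul_re]

lemma norm_cexp_I_mul (ω : ℝ) (w : ℂ) : ‖cexp (I * ω * w)‖ = Real.exp (-(ω * w.im)) := by
  rw [Complex.norm_exp]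
  congr 1
  simp [Complex.mul_re]

lemma norm_cexp_neg_I_mul_le {z : ℂ} {a R : ℝ} (ha : |a| ≤ R) :
    ‖cexp (-(I * z * a))‖ ≤ Real.exp (‖z‖ * R) := by
  rw [norm_cexp_neg_I_mul, Real.exp_le_exp]
  calc z.im * a ≤ |z.im| * |a| := by rw [← abs_mul]; exact le_abs_self _
    _ ≤ ‖z‖ * R := by gcongr; exact abs_im_le_norm z

section FourierLaplace

variable {μ : Measure ℝ} {h : ℝ → ℂ} {R : ℝ}

lemma norm_fourierLaplace_ofReal_le (t : ℝ) : ‖fourierLaplace μ h t‖ ≤ ∫ a, ‖h a‖ ∂μ :=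
  (norm_integral_le_integral_norm _).trans_eq (by simp [norm_cexp_neg_I_mul])

lemma ae_norm_cexp_neg_I_mul_mul_le (hsupp : ∀ᵐ a ∂μ, h a ≠ 0 → |a| ≤ R) (z : ℂ) :
    ∀ᵐ a : ℝ ∂μ, ‖cexp (-(I * z * a)) * h a‖ ≤ Real.exp (‖z‖ * R) * ‖h a‖ := by
  filter_upwards [hsupp] with a ha
  by_cases h0 : h a = 0
  · simp [h0]
  rw [norm_mul]
  gcongr
  exact norm_cexp_neg_I_mul_le (ha h0)

lemma norm_fourierLaplace_le (hint : Integrable h μ) (hsupp : ∀ᵐ a ∂μ, h a ≠ 0 → |a| ≤ R)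
    (z : ℂ) : ‖fourierLaplace μ h z‖ ≤ (∫ a, ‖h a‖ ∂μ) * Real.exp (R * ‖z‖) := by
  rw [mul_comm, mul_comm R, ← integral_const_mul]
  exact norm_integral_le_of_norm_le (hint.norm.const_mul _) (ae_norm_cexp_neg_I_mul_mul_le hsupp z)

lemma differentiable_fourierLaplace (hint : Integrable h μ)
    (hsupp : ∀ᵐ a ∂μ, h a ≠ 0 → |a| ≤ R) : Differentiable ℂ (fourierLaplace μ h) := by
  intro z₀
  have hmeas : ∀ z : ℂ, AEStronglyMeasurable (fun a : ℝ => cexp (-(I * z * a)) * h a) μ :=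
    fun z => (Continuous.aestronglyMeasurable (by fun_prop)).mul hint.aestronglyMeasurable
  have hderiv_bound : ∀ᵐ a : ℝ ∂μ, ∀ z ∈ Metric.ball z₀ 1,
      ‖-(I * a) * (cexp (-(I * z * a)) * h a)‖ ≤ R * Real.exp ((‖z₀‖ + 1) * R) * ‖h a‖ := by
    filter_upwards [hsupp] with a ha z hz
    by_cases h0 : h a = 0
    · simp [h0]
    have hR : 0 ≤ R := (abs_nonneg a).trans (ha h0)
    have hz : ‖z‖ ≤ ‖z₀‖ + 1 :=
      (norm_le_norm_add_norm_sub' z z₀).trans (by gcongr; exact (mem_ball_iff_norm.1 hz).le)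
    rw [norm_mul, norm_mul, ← mul_assoc]
    gcongr
    · simpa using ha h0
    · exact (norm_cexp_neg_I_mul_le (ha h0)).trans (by gcongr)
  have hderiv : ∀ᵐ a : ℝ ∂μ, ∀ z ∈ Metric.ball z₀ 1, HasDerivAt
      (fun z => cexp (-(I * z * a)) * h a) (-(I * a) * (cexp (-(I * z * a)) * h a)) z := by
    filter_upwards with a z _
    have hlin : HasDerivAt (fun w : ℂ => -(I * w * a)) (-(I * a)) z := by
      simpa [mul_comm, mul_left_comm] using (hasDerivAt_id z).const_mul (-(I * a))
    exact (hlin.cexp.mul_const (h a)).congr_deriv (by ring)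
  exact (hasDerivAt_integral_of_dominated_loc_of_deriv_le (Metric.ball_mem_nhds z₀ one_pos)
    (Eventually.of_forall hmeas)
    ((hint.norm.const_mul _).mono' (hmeas z₀) (ae_norm_cexp_neg_I_mul_mul_le hsupp z₀))
    ((Continuous.aestronglyMeasurable (by fun_prop)).mul (hmeas z₀)) hderiv_bound
    (hint.norm.const_mul _) hderiv).2.differentiableAt

lemma integral_fourierLaplace_mul_gaussian [SFinite μ] (hint : Integrable h μ) (ξ : ℝ) {ε : ℝ}
    (hε : 0 < ε) :
    ∫ t : ℝ, fourierLaplace μ h t * cexp (I * ξ * t) * cexp (-ε * t ^ 2) =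
      √(π / ε) * ∫ a, Real.exp (-(ξ - a) ^ 2 / (4 * ε)) * h a ∂μ := by
  set Φ : ℝ → ℝ → ℂ := fun t a => cexp (I * (ξ - a : ℝ) * t) * cexp (-ε * t ^ 2) * h a
  have hΦ : ∀ t : ℝ, fourierLaplace μ h t * cexp (I * ξ * t) * cexp (-ε * t ^ 2) =
      ∫ a, Φ t a ∂μ := fun t => by
    rw [fourierLaplace, ← integral_mul_const, ← integral_mul_const]
    refine integral_congr_ae (Eventually.of_forall fun a => ?_)
    simp only [Φ]
    rw [show I * ((ξ - a : ℝ) : ℂ) * t = I * ξ * t + -(I * t * a) by push_cast; ring,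
      Complex.exp_add]
    ring
  have hΦint : Integrable (Function.uncurry Φ) (volume.prod μ) := by
    refine ((integrable_exp_neg_mul_sq hε).mul_prod hint.norm).mono'
      ((Continuous.aestronglyMeasurable (by fun_prop)).mul hint.aestronglyMeasurable.comp_snd)
      (Eventually.of_forall fun p => le_of_eq ?_)
    simp only [Function.uncurry, Φ, norm_mul, Complex.norm_exp]
    simp [Complex.mul_re, sq]
  have hsqrt : ((π / ε : ℂ)) ^ (1 / 2 : ℂ) = √(π / ε) := by
    rw [Real.sqrt_eq_rpow, ofReal_cpow (by positivity)]
    push_cast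
    rfl
  have hinner : ∀ a : ℝ, ∫ t : ℝ, Φ t a = √(π / ε) * (Real.exp (-(ξ - a) ^ 2 / (4 * ε)) * h a) :=
    fun a => by
      simp only [Φ]
      rw [integral_mul_const, fourierIntegral_gaussian (by simpa using hε), hsqrt]
      push_cast
      ring
  rw [integral_congr_ae (Eventually.of_forall hΦ), integral_integral_swap hΦint,
    integral_congr_ae (Eventually.of_forall hinner), integral_const_mul]

end FourierLaplace

section PhragmenLindelof

variable {F : ℂ → ℂ} {ω B C : ℝ}

lemma norm_le_max_mul_exp_im_of_exponentialType (hF : Differentiable ℂ F)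
    (hB : ∀ t : ℝ, ‖F t‖ ≤ B) (hC : ∀ z, ‖F z‖ ≤ C * Real.exp (ω * ‖z‖)) {z : ℂ}
    (hz : 0 ≤ z.im) : ‖F z‖ ≤ max B C * Real.exp (ω * z.im) := by
  -- `e^{iωz}` cancels the growth of `F` along the positive imaginary axis.
  set P : ℂ → ℂ := fun w => F w * cexp (I * ω * w)
  have hP : Differentiable ℂ P := by fun_prop
  have hnormP : ∀ w, ‖P w‖ = ‖F w‖ * Real.exp (-(ω * w.im)) := fun w => by
    rw [norm_mul, norm_cexp_I_mul]
  have hC0 : 0 ≤ C := by simpa using (norm_nonneg _).trans (hC 0)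
  have hgrowth : ∀ l, P =O[l] fun w => Real.exp (2 * |ω| * ‖w‖ ^ (1 : ℝ)) := fun l =>
    Asymptotics.IsBigO.of_bound C <| Eventually.of_forall fun w => by
      have h1 : ω * ‖w‖ ≤ |ω| * ‖w‖ := by gcongr; exact le_abs_self ω
      have h2 : -(ω * w.im) ≤ |ω| * ‖w‖ :=
        (neg_le_abs _).trans (by rw [abs_mul]; gcongr; exact abs_im_le_norm w)
      rw [hnormP, Real.rpow_one, Real.norm_of_nonneg (Real.exp_pos _).le]
      calc ‖F w‖ * Real.exp (-(ω * w.im))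
          ≤ C * Real.exp (ω * ‖w‖) * Real.exp (-(ω * w.im)) := by gcongr; exact hC w
        _ ≤ C * Real.exp (2 * |ω| * ‖w‖) := by
          rw [mul_assoc, ← Real.exp_add]; gcongr; linarith
  have hreal : ∀ x : ℝ, ‖P x‖ ≤ max B C := fun x => by
    simpa [hnormP] using (hB x).trans (le_max_left B C)
  have himag : ∀ x : ℝ, 0 ≤ x → ‖P (x * I)‖ ≤ max B C := fun x hx => by
    calc ‖P (x * I)‖ ≤ C * Real.exp (ω * x) * Real.exp (-(ω * x)) := by
          rw [hnormP, mul_I_im, ofReal_re]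
          gcongr
          simpa [abs_of_nonneg hx] using hC (x * I)
      _ = C := by rw [mul_assoc, ← Real.exp_add]; simp
      _ ≤ max B C := le_max_right B C
  have hPz : ‖P z‖ ≤ max B C := by
    rcases le_total 0 z.re with hz_re | hz_re
    · exact PhragmenLindelof.quadrant_I hP.diffContOnCl ⟨1, one_lt_two, _, hgrowth _⟩
        (fun x _ => hreal x) himag hz_re hz
    · exact PhragmenLindelof.quadrant_II hP.diffContOnCl ⟨1, one_lt_two, _, hgrowth _⟩
        (fun x _ => hreal x) himag hz_re hz
  calc ‖F z‖ = ‖P z‖ * Real.exp (ω * z.im) := by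
        rw [hnormP, mul_assoc, ← Real.exp_add]; simp
    _ ≤ max B C * Real.exp (ω * z.im) := by gcongr

lemma norm_le_max_mul_exp_abs_im_of_exponentialType (hF : Differentiable ℂ F)
    (hB : ∀ t : ℝ, ‖F t‖ ≤ B) (hC : ∀ z, ‖F z‖ ≤ C * Real.exp (ω * ‖z‖)) (z : ℂ) :
    ‖F z‖ ≤ max B C * Real.exp (ω * |z.im|) := by
  rcases le_total 0 z.im with hz | hz
  · rw [abs_of_nonneg hz]
    exact norm_le_max_mul_exp_im_of_exponentialType hF hB hC hz
  · simpa [abs_of_nonpos hz] using norm_le_max_mul_exp_im_of_exponentialType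
      (F := fun w => F (-w)) (hF.comp differentiable_neg) (fun t => by simpa using hB (-t))
      (fun w => by simpa using hC (-w)) (z := -z) (by simpa using hz)

end PhragmenLindelof

lemma integral_add_mul_I_eq_integral {g : ℂ → ℂ} (hg : Differentiable ℂ g) {b : ℝ → ℝ}
    (hb_int : Integrable b) (hb_lim : Tendsto b (cocompact ℝ) (𝓝 0)) {R : ℝ} (hR : 0 ≤ R)
    (hgb : ∀ t y : ℝ, y ∈ Icc 0 R → ‖g (t + y * I)‖ ≤ b t) :
    ∫ t : ℝ, g (t + R * I) = ∫ t : ℝ, g t := by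
  have hint : ∀ y ∈ Icc 0 R, Integrable fun t : ℝ => g (t + y * I) := fun y hy =>
    hb_int.mono' (hg.continuous.comp (by fun_prop)).aestronglyMeasurable
      (Eventually.of_forall fun t => hgb t y hy)
  set V : ℝ → ℂ := fun s => ∫ y in (0 : ℝ)..R, g (s + y * I)
  have hV_le : ∀ s, ‖V s‖ ≤ b s * |R - 0| := fun s =>
    intervalIntegral.norm_integral_le_of_norm_le_const fun y hy =>
      hgb s y (Ioc_subset_Icc_self (by rwa [uIoc_of_le hR] at hy))
  have hV : Tendsto V (cocompact ℝ) (𝓝 0) :=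
    tendsto_zero_iff_norm_tendsto_zero.2 (squeeze_zero (fun _ => norm_nonneg _) hV_le
      (by simpa using hb_lim.mul_const |R - 0|))
  have hrect : ∀ T : ℝ,
      ∫ x in -T..T, g (x + R * I) = (∫ x in -T..T, g x) + I * V T - I * V (-T) := by
    intro T
    have := integral_boundary_rect_eq_zero_of_differentiableOn g ((-T : ℝ) : ℂ) (T + R * I)
      hg.differentiableOn
    simp only [add_re, add_im, ofReal_re, ofReal_im, mul_re, mul_im, I_re, I_im, mul_zero,
      mul_one, sub_zero, zero_add, add_zero, ofReal_zero, zero_mul, smul_eq_mul] at this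
    simp only [V]
    push_cast at this ⊢
    linear_combination -this
  refine tendsto_nhds_unique ((intervalIntegral_tendsto_integral (hint R ⟨hR, le_rfl⟩)
    tendsto_neg_atTop_atBot tendsto_id).congr fun T => hrect T) ?_
  simpa using ((intervalIntegral_tendsto_integral (by simpa using hint 0 ⟨le_rfl, hR⟩)
    tendsto_neg_atTop_atBot tendsto_id).add ((hV.mono_left atTop_le_cocompact).const_mul I)).sub
    ((hV.comp (tendsto_neg_atTop_atBot.mono_right atBot_le_cocompact)).const_mul I)

section GaussianPacket

variable {F : ℂ → ℂ} {M ω : ℝ}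

lemma norm_mul_cexp_mul_cexp_neg_sq_le (hM : ∀ z, ‖F z‖ ≤ M * Real.exp (ω * |z.im|))
    (ξ ε t : ℝ) {y : ℝ} (hy : 0 ≤ y) :
    ‖F (t + y * I) * cexp (I * ξ * (t + y * I)) * cexp (-ε * (t + y * I) ^ 2)‖ ≤
      M * Real.exp ((ω - ξ) * y + ε * y ^ 2) * Real.exp (-ε * t ^ 2) := by
  have hre : (-ε * (t + y * I) ^ 2 : ℂ).re = ε * y ^ 2 + -ε * t ^ 2 := by
    simp [sq]
    ring
  have him : (t + y * I : ℂ).im = y := by simp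
  rw [norm_mul, norm_mul, norm_cexp_I_mul, Complex.norm_exp, hre, him]
  calc ‖F (t + y * I)‖ * Real.exp (-(ξ * y)) * Real.exp (ε * y ^ 2 + -ε * t ^ 2)
      ≤ M * Real.exp (ω * y) * Real.exp (-(ξ * y)) * Real.exp (ε * y ^ 2 + -ε * t ^ 2) := by
        gcongr
        simpa [abs_of_nonneg hy] using hM (t + y * I)
    _ = M * Real.exp ((ω - ξ) * y + ε * y ^ 2) * Real.exp (-ε * t ^ 2) := by
        rw [show (ω - ξ) * y + ε * y ^ 2 = ω * y + -(ξ * y) + ε * y ^ 2 by ring]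
        simp only [Real.exp_add]
        ring

lemma integral_exp_neg_sq_mul_le_of_norm_le_exp_abs_im {μ : Measure ℝ} [SFinite μ]
    {w : ℝ → ℝ} (hw : Integrable w μ) (hF : Differentiable ℂ F)
    (hM : ∀ z, ‖F z‖ ≤ M * Real.exp (ω * |z.im|))
    (hFt : ∀ t : ℝ, F t = fourierLaplace μ (fun a => w a) t) {ξ ε : ℝ} (hξ : ω < ξ)
    (hε : 0 < ε) :
    ∫ a, Real.exp (-(ξ - a) ^ 2 / (4 * ε)) * w a ∂μ ≤
      M * Real.exp (-(ξ - ω) ^ 2 / (4 * ε)) := by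
  set g : ℂ → ℂ := fun z => F z * cexp (I * ξ * z) * cexp (-ε * z ^ 2)
  have hg_le := norm_mul_cexp_mul_cexp_neg_sq_le hM ξ ε
  have hM0 : 0 ≤ M := by simpa using (norm_nonneg _).trans (hM 0)
  -- `R` minimises the exponent `(ω - ξ) R + ε R²` of the bound on the line `Im z = R`.
  set R := (ξ - ω) / (2 * ε)
  have hR : 0 ≤ R := div_nonneg (by linarith) (by positivity)
  have hgauss_lim : Tendsto (fun t : ℝ => M * Real.exp (ε * R ^ 2) * Real.exp (-ε * t ^ 2))
      (cocompact ℝ) (𝓝 0) := by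
    simpa using (tendsto_rpow_abs_mul_exp_neg_mul_sq_cocompact hε 0).const_mul
      (M * Real.exp (ε * R ^ 2))
  have hshift : ∫ t : ℝ, g (t + R * I) = ∫ t : ℝ, g t :=
    integral_add_mul_I_eq_integral (by fun_prop) ((integrable_exp_neg_mul_sq hε).const_mul _)
      hgauss_lim hR fun t y hy => (hg_le t hy.1).trans (by
        gcongr
        nlinarith [mul_nonneg (sub_nonneg.2 hξ.le) hy.1,
          mul_le_mul_of_nonneg_left (pow_le_pow_left₀ hy.1 hy.2 2) hε.le])
  have hreal : ∫ t : ℝ, g t =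
      √(π / ε) * ((∫ a, Real.exp (-(ξ - a) ^ 2 / (4 * ε)) * w a ∂μ : ℝ) : ℂ) := by
    have hwC : Integrable (fun a => (w a : ℂ)) μ := hw.ofReal
    simp only [g, hFt]
    rw [integral_fourierLaplace_mul_gaussian hwC ξ hε]
    simp only [← ofReal_mul, integral_complex_ofReal]
  have hshifted : ‖∫ t : ℝ, g (t + R * I)‖ ≤
      M * Real.exp (-(ξ - ω) ^ 2 / (4 * ε)) * √(π / ε) := by
    have hR_exp : (ω - ξ) * R + ε * R ^ 2 = -(ξ - ω) ^ 2 / (4 * ε) := by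
      simp only [R]
      field_simp
      ring
    refine (norm_integral_le_of_norm_le ((integrable_exp_neg_mul_sq hε).const_mul _)
      (Eventually.of_forall fun t => hg_le t hR)).trans_eq ?_
    rw [integral_const_mul, integral_gaussian, hR_exp]
  rw [hshift, hreal, norm_mul, norm_real, norm_real, mul_comm] at hshifted
  have hsqrt : 0 < √(π / ε) := Real.sqrt_pos.2 (by positivity)
  exact (le_abs_self _).trans
    (le_of_mul_le_mul_right (by simpa [abs_of_pos hsqrt] using hshifted) hsqrt)

end GaussianPacket

section Localization

variable {μ : Measure ℝ} {w : ℝ → ℝ} {M ω : ℝ}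

lemma setIntegral_ball_le_of_integral_gaussian_le (hw0 : ∀ a, 0 ≤ w a) (hw : Integrable w μ)
    {ξ ε : ℝ} (hε : 0 < ε) (hbound :
      ∫ a, Real.exp (-(ξ - a) ^ 2 / (4 * ε)) * w a ∂μ ≤ M * Real.exp (-(ξ - ω) ^ 2 / (4 * ε))) :
    ∫ a in Metric.ball ξ ((ξ - ω) / 2), w a ∂μ ≤
      M * Real.exp (-(3 * (ξ - ω) ^ 2 / 16) * ε⁻¹) := by
  set η := (ξ - ω) / 2
  have hgauss_int : Integrable (fun a => Real.exp (-(ξ - a) ^ 2 / (4 * ε)) * w a) μ :=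
    hw.bdd_mul (c := 1) (by fun_prop) (Eventually.of_forall fun a => by
      rw [Real.norm_of_nonneg (Real.exp_pos _).le, Real.exp_le_one_iff]
      exact div_nonpos_of_nonpos_of_nonneg (by nlinarith) (by positivity))
  calc ∫ a in Metric.ball ξ η, w a ∂μ
      ≤ ∫ a in Metric.ball ξ η, Real.exp (η ^ 2 / (4 * ε)) *
          (Real.exp (-(ξ - a) ^ 2 / (4 * ε)) * w a) ∂μ := by
        refine setIntegral_mono_on hw.integrableOn (hgauss_int.const_mul _).integrableOn
          measurableSet_ball fun a ha => ?_
        rw [← mul_assoc, ← Real.exp_add, ← add_div]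
        refine le_mul_of_one_le_left (hw0 a) (Real.one_le_exp (div_nonneg ?_ (by positivity)))
        rw [Metric.mem_ball, Real.dist_eq, abs_lt] at ha
        nlinarith
    _ ≤ Real.exp (η ^ 2 / (4 * ε)) * ∫ a, Real.exp (-(ξ - a) ^ 2 / (4 * ε)) * w a ∂μ := by
        rw [integral_const_mul]
        exact mul_le_mul_of_nonneg_left (setIntegral_le_integral hgauss_int
          (Eventually.of_forall fun a => mul_nonneg (Real.exp_pos _).le (hw0 a))) (by positivity)
    _ ≤ Real.exp (η ^ 2 / (4 * ε)) * (M * Real.exp (-(ξ - ω) ^ 2 / (4 * ε))) := by gcongr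
    _ = M * Real.exp (-(3 * (ξ - ω) ^ 2 / 16) * ε⁻¹) := by
        rw [mul_left_comm, ← Real.exp_add]
        congr 2
        field_simp
        ring

lemma setIntegral_ball_eq_zero_of_forall_integral_gaussian_le (hw0 : ∀ a, 0 ≤ w a)
    (hw : Integrable w μ) {ξ : ℝ} (hξ : ω < ξ) (hbound : ∀ ε, 0 < ε →
      ∫ a, Real.exp (-(ξ - a) ^ 2 / (4 * ε)) * w a ∂μ ≤ M * Real.exp (-(ξ - ω) ^ 2 / (4 * ε))) :
    ∫ a in Metric.ball ξ ((ξ - ω) / 2), w a ∂μ = 0 := by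
  have hlim : Tendsto (fun ε : ℝ => M * Real.exp (-(3 * (ξ - ω) ^ 2 / 16) * ε⁻¹))
      (𝓝[>] 0) (𝓝 0) := by
    have hc : -(3 * (ξ - ω) ^ 2 / 16) < 0 := by
      have : 0 < (ξ - ω) ^ 2 := by nlinarith
      linarith
    simpa using (Real.tendsto_exp_atBot.comp
      (tendsto_inv_nhdsGT_zero.const_mul_atTop_of_neg hc)).const_mul M
  exact le_antisymm (ge_of_tendsto hlim (eventually_nhdsWithin_of_forall fun ε hε =>
      setIntegral_ball_le_of_integral_gaussian_le hw0 hw hε (hbound ε hε)))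
    (setIntegral_nonneg measurableSet_ball fun a _ => hw0 a)

lemma ae_eq_zero_of_forall_integral_gaussian_le (hw0 : ∀ a, 0 ≤ w a)
    (hw : Integrable w μ) (hbound : ∀ ξ, ω < ξ → ∀ ε, 0 < ε →
      ∫ a, Real.exp (-(ξ - a) ^ 2 / (4 * ε)) * w a ∂μ ≤ M * Real.exp (-(ξ - ω) ^ 2 / (4 * ε))) :
    ∀ᵐ a ∂μ, ω < a → w a = 0 := by
  refine ae_iff.2 (measure_null_of_locally_null _ fun ξ hξ => ?_)
  have hξω : ω < ξ := (Classical.not_imp.1 hξ).1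
  have hball : ∀ᵐ a ∂μ, a ∈ Metric.ball ξ ((ξ - ω) / 2) → w a = 0 :=
    (ae_restrict_iff' measurableSet_ball).1 <|
      (setIntegral_eq_zero_iff_of_nonneg_ae (Eventually.of_forall hw0) hw.integrableOn).1
        (setIntegral_ball_eq_zero_of_forall_integral_gaussian_le hw0 hw hξω (hbound ξ hξω))
  refine ⟨_, inter_mem_nhdsWithin _ (Metric.ball_mem_nhds ξ (by linarith : 0 < (ξ - ω) / 2)),
    measure_mono_null (fun a ha => ?_) (ae_iff.1 hball)⟩
  exact fun h => (Classical.not_imp.1 ha.1).2 (h ha.2)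

end Localization

theorem ae_eq_zero_of_fourierLaplace_of_exponentialType {μ : Measure ℝ} [SFinite μ]
    {w : ℝ → ℝ} (hw0 : ∀ a, 0 ≤ w a) (hw : Integrable w μ) {F : ℂ → ℂ}
    (hF : Differentiable ℂ F) {ω B C : ℝ} (hB : ∀ t : ℝ, ‖F t‖ ≤ B)
    (hC : ∀ z, ‖F z‖ ≤ C * Real.exp (ω * ‖z‖))
    (hFt : ∀ t : ℝ, F t = fourierLaplace μ (fun a => w a) t) :
    ∀ᵐ a ∂μ, ω < a → w a = 0 :=
  ae_eq_zero_of_forall_integral_gaussian_le hw0 hw fun _ hξ _ hε =>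
    integral_exp_neg_sq_mul_le_of_norm_le_exp_abs_im hw hF
      (norm_le_max_mul_exp_abs_im_of_exponentialType hF hB hC) hFt hξ hε

theorem mem_PW_iff_entire_matrix_coefficients_general
    (μ : Measure ℝ) [SigmaFinite μ] (hμ : μ (Set.Iio 0) = 0)
    (ω : ℝ) (f : Lp E 2 μ) :
    f ∈ PW (E := E) μ ω ↔
      ∀ g : Lp E 2 μ,
        (∃ B : ℝ, ∀ t : ℝ, ‖(inner ℂ (Ugrp μ t f) g : ℂ)‖ ≤ B) ∧
        ∃ F : ℂ → ℂ, Differentiable ℂ F ∧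
          (∃ C : ℝ, ∀ z : ℂ, ‖F z‖ ≤ C * Real.exp (ω * ‖z‖)) ∧
          ∀ t : ℝ, F t = (inner ℂ (Ugrp μ t f) g : ℂ) := by
  simp only [inner_Ugrp]
  constructor
  · intro hf g
    have hint := L2.integrable_inner (𝕜 := ℂ) f g
    have hsupp : ∀ᵐ a ∂μ, inner ℂ (f a) (g a) ≠ 0 → |a| ≤ ω := by
      filter_upwards [hf, measure_eq_zero_iff_ae_notMem.1 hμ] with a hfa ha0 hne
      have haω : a ≤ ω := not_lt.1 fun h => hne (by simp [hfa h])
      exact (abs_of_nonneg (by simpa using ha0)).trans_le haω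
    exact ⟨⟨_, norm_fourierLaplace_ofReal_le⟩, _, differentiable_fourierLaplace hint hsupp,
      ⟨_, norm_fourierLaplace_le hint hsupp⟩, fun _ => rfl⟩
  · intro H
    obtain ⟨⟨B, hB⟩, F, hF, ⟨C, hC⟩, hFt⟩ := H f
    simp only [inner_self_eq_norm_sq_to_K] at hB hFt
    have hw : ∀ᵐ a ∂μ, ω < a → ‖f a‖ ^ 2 = 0 :=
      ae_eq_zero_of_fourierLaplace_of_exponentialType (fun a => sq_nonneg _)
        (Lp.memLp f).norm.integrable_sq hF (fun t => hFt t ▸ hB t) hC (by simpa using hFt)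
    filter_upwards [hw] with a ha hωa
    simpa using ha hωa

/-- Let `ω > 0`. A vector `f ∈ H` belongs to `PW_ω(D)` if and only if for every
`g ∈ H` the scalar function `t ↦ ⟨e^{itD} f, g⟩` is bounded on the real line and extends to an
entire function `F_g : ℂ → ℂ` of exponential type `ω`. -/
theorem mem_PW_iff_entire_matrix_coefficients
    (μ : Measure ℝ) [SigmaFinite μ] (hμ : μ (Set.Iio 0) = 0)
    (ω : ℝ) (hω : 0 < ω) (f : Lp E 2 μ) :
    f ∈ PW (E := E) μ ω ↔
      ∀ g : Lp E 2 μ,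
        (∃ B : ℝ, ∀ t : ℝ, ‖(inner ℂ (Ugrp μ t f) g : ℂ)‖ ≤ B) ∧
        ∃ F : ℂ → ℂ, Differentiable ℂ F ∧
          (∃ C : ℝ, ∀ z : ℂ, ‖F z‖ ≤ C * Real.exp (ω * ‖z‖)) ∧
          ∀ t : ℝ, F t = (inner ℂ (Ugrp μ t f) g : ℂ) :=
  mem_PW_iff_entire_matrix_coefficients_general μ hμ ω f
end

section
/- Let ω > 0. A vector f ∈ H belongs to PW_ω(D) if and only if: for every z ∈ ℂ the function λ ↦ e^{izλ} f(λ) belongs to H, the resulting H-valued function u(z) = (λ ↦ e^{izλ} f(λ)) is entire (analytic on all of ℂ as a map into H), u(t) = e^{itD} f for real t, and ‖u(z)‖ ≤ e^{ω |Im z|} ‖f‖ for all z ∈ ℂ. (Equivalently, the solution of the abstract Schrödinger Cauchy problem i ∂_t u = D u, u(0) = f, extends to an entire H-valued function satisfying this exponential bound.) -/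
open MeasureTheory Complex Filter
open scoped ENNReal Real

set_option linter.unusedSectionVars false

variable {E : Type*} [NormedAddCommGroup E] [InnerProductSpace ℂ E]
  [CompleteSpace E] [SecondCountableTopology E]

/-!
Forward direction: a vector of `PW_ω(D)` vanishes off the compact set `[0, ω] ⊆ [-ω, ω]`, on
which `|e^{izλ}| ≤ e^{ω |Im z|}` and the Taylor remainder `e^{i(z+h)λ} - e^{izλ} - ihλ e^{izλ}`
is `O(|h|²)` uniformly in `λ`. Multiplying `f` by these functions therefore gives an entire
`H`-valued function with the required bound, whose derivative is multiplication by `iλ e^{izλ}`.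

Converse: on the imaginary axis `z = -is`, `s > 0`, the bound reads `‖e^{sλ} f‖ ≤ e^{sω} ‖f‖`,
so the part of `f` on `[ω + ε, ∞)` has norm at most `e^{-sε} ‖f‖`; let `s → ∞`.
-/

open scoped Topology

theorem hasDerivAt_of_eventually_norm_sub_sub_le_sq {𝕜 F : Type*} [NontriviallyNormedField 𝕜]
    [NormedAddCommGroup F] [NormedSpace 𝕜 F] {φ : 𝕜 → F} {φ' : F} {z : 𝕜} {C : ℝ}
    (h : ∀ᶠ h in 𝓝 0, ‖φ (z + h) - φ z - h • φ'‖ ≤ C * ‖h‖ ^ 2) : HasDerivAt φ φ' z :=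
  hasDerivAt_iff_isLittleO_nhds_zero.2 <|
    (Asymptotics.IsBigO.of_bound C (by simpa only [norm_pow] using h)).trans_isLittleO
      (Asymptotics.isLittleO_pow_id one_lt_two)

section CompactSupport

variable {α F : Type*} [MeasurableSpace α] [NormedAddCommGroup F] [NormedSpace ℂ F]
  {μ : Measure α} {p : ℝ≥0∞} {K : Set α} {f : Lp F p μ}

theorem ae_norm_smul_le_of_norm_le_on (hf : ∀ᵐ x ∂μ, x ∉ K → f x = 0) {g : α → ℂ} {C : ℝ}
    (hg : ∀ x ∈ K, ‖g x‖ ≤ C) : ∀ᵐ x ∂μ, ‖g x • f x‖ ≤ C * ‖f x‖ := by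
  filter_upwards [hf] with x hx
  by_cases hxK : x ∈ K
  · rw [norm_smul]
    exact mul_le_mul_of_nonneg_right (hg x hxK) (norm_nonneg _)
  · simp [hx hxK]

variable [TopologicalSpace α] [OpensMeasurableSpace α] [SecondCountableTopologyEither α ℂ]

theorem memLp_smul_of_continuous (hK : IsCompact K) (hf : ∀ᵐ x ∂μ, x ∉ K → f x = 0)
    {g : α → ℂ} (hg : Continuous g) : MemLp (fun x => g x • f x) p μ :=
  have ⟨_, hC⟩ := hK.exists_bound_of_continuousOn hg.continuousOn
  (Lp.memLp f).of_le_mul (hg.aestronglyMeasurable.smul (Lp.aestronglyMeasurable f))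
    (ae_norm_smul_le_of_norm_le_on hf hC)

noncomputable def smulLpOfContinuous (hK : IsCompact K) (hf : ∀ᵐ x ∂μ, x ∉ K → f x = 0)
    (g : α → ℂ) (hg : Continuous g) : Lp F p μ :=
  (memLp_smul_of_continuous hK hf hg).toLp _

theorem coeFn_smulLpOfContinuous (hK : IsCompact K) (hf : ∀ᵐ x ∂μ, x ∉ K → f x = 0)
    {g : α → ℂ} (hg : Continuous g) :
    smulLpOfContinuous hK hf g hg =ᵐ[μ] fun x => g x • f x :=
  MemLp.coeFn_toLp _

theorem norm_smulLpOfContinuous_le (hK : IsCompact K) (hf : ∀ᵐ x ∂μ, x ∉ K → f x = 0)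
    {g : α → ℂ} (hg : Continuous g) {C : ℝ} (hC : ∀ x ∈ K, ‖g x‖ ≤ C) :
    ‖smulLpOfContinuous hK hf g hg‖ ≤ C * ‖f‖ :=
  Lp.norm_le_mul_norm_of_ae_le_mul <| by
    filter_upwards [coeFn_smulLpOfContinuous hK hf hg, ae_norm_smul_le_of_norm_le_on hf hC]
      with x hx hC
    rwa [hx]

end CompactSupport

theorem norm_exp_I_mul_le (z : ℂ) {x ω : ℝ} (hx : |x| ≤ ω) :
    ‖exp (I * z * x)‖ ≤ Real.exp (ω * |z.im|) := by
  have hre : (I * z * x).re = -z.im * x := by simp [mul_re]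
  rw [norm_exp, hre, Real.exp_le_exp]
  calc -z.im * x ≤ |z.im| * |x| := (le_abs_self _).trans_eq (by rw [abs_mul, abs_neg])
    _ ≤ ω * |z.im| := by rw [mul_comm]; gcongr

theorem norm_exp_I_mul_add_sub_sub_le (z h : ℂ) {x ω : ℝ} (hx : |x| ≤ ω) (hh : ‖h‖ * ω ≤ 1) :
    ‖exp (I * (z + h) * x) - exp (I * z * x) - h * (I * x * exp (I * z * x))‖
      ≤ Real.exp (ω * |z.im|) * ω ^ 2 * ‖h‖ ^ 2 := by
  have hfactor : exp (I * (z + h) * x) - exp (I * z * x) - h * (I * x * exp (I * z * x))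
      = exp (I * z * x) * (exp (I * h * x) - 1 - I * h * x) := by
    rw [show I * (z + h) * x = I * z * x + I * h * x by ring, exp_add]; ring
  have hhx : ‖I * h * x‖ ≤ ‖h‖ * ω := by
    simpa using mul_le_mul_of_nonneg_left hx (norm_nonneg h)
  rw [hfactor, norm_mul]
  calc ‖exp (I * z * x)‖ * ‖exp (I * h * x) - 1 - I * h * x‖
      ≤ Real.exp (ω * |z.im|) * (‖h‖ * ω) ^ 2 := by
        gcongr
        · exact norm_exp_I_mul_le z hx
        · exact (norm_exp_sub_one_sub_id_le (hhx.trans hh)).trans (by gcongr)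
    _ = Real.exp (ω * |z.im|) * ω ^ 2 * ‖h‖ ^ 2 := by ring

section ExpSmul

variable {F : Type*} [NormedAddCommGroup F] [NormedSpace ℂ F] {μ : Measure ℝ} {p : ℝ≥0∞}
  {ω : ℝ} {f : Lp F p μ} (hf : ∀ᵐ x ∂μ, x ∉ Metric.closedBall 0 ω → f x = 0)

noncomputable def expSmulLp (z : ℂ) : Lp F p μ :=
  smulLpOfContinuous (isCompact_closedBall 0 ω) hf (fun x : ℝ => exp (I * z * x)) (by fun_prop)

noncomputable def derivExpSmulLp (z : ℂ) : Lp F p μ :=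
  smulLpOfContinuous (isCompact_closedBall 0 ω) hf (fun x : ℝ => I * x * exp (I * z * x))
    (by fun_prop)

theorem coeFn_expSmulLp (z : ℂ) : expSmulLp hf z =ᵐ[μ] fun x => exp (I * z * x) • f x :=
  coeFn_smulLpOfContinuous _ hf _

theorem coeFn_derivExpSmulLp (z : ℂ) :
    derivExpSmulLp hf z =ᵐ[μ] fun x => (I * x * exp (I * z * x)) • f x :=
  coeFn_smulLpOfContinuous _ hf _

theorem norm_expSmulLp_le (z : ℂ) : ‖expSmulLp hf z‖ ≤ Real.exp (ω * |z.im|) * ‖f‖ :=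
  norm_smulLpOfContinuous_le _ hf _ fun _ hx =>
    norm_exp_I_mul_le z (mem_closedBall_zero_iff.1 hx)

theorem norm_expSmulLp_add_sub_sub_le [Fact (1 ≤ p)] (z h : ℂ) (hh : ‖h‖ * ω ≤ 1) :
    ‖expSmulLp hf (z + h) - expSmulLp hf z - h • derivExpSmulLp hf z‖
      ≤ Real.exp (ω * |z.im|) * ω ^ 2 * ‖h‖ ^ 2 * ‖f‖ := by
  refine Lp.norm_le_mul_norm_of_ae_le_mul ?_
  have hbound := ae_norm_smul_le_of_norm_le_on hf fun x hx =>
    norm_exp_I_mul_add_sub_sub_le z h (mem_closedBall_zero_iff.1 hx) hh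
  filter_upwards [Lp.coeFn_sub (expSmulLp hf (z + h) - expSmulLp hf z) (h • derivExpSmulLp hf z),
    Lp.coeFn_sub (expSmulLp hf (z + h)) (expSmulLp hf z), Lp.coeFn_smul h (derivExpSmulLp hf z),
    coeFn_expSmulLp hf (z + h), coeFn_expSmulLp hf z, coeFn_derivExpSmulLp hf z, hbound]
    with x h₁ h₂ h₃ h₄ h₅ h₆ hx
  rw [h₁, Pi.sub_apply, h₂, Pi.sub_apply, h₃, Pi.smul_apply, h₄, h₅, h₆, smul_smul, ← sub_smul,
    ← sub_smul]
  exact hx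

theorem hasDerivAt_expSmulLp [Fact (1 ≤ p)] (z : ℂ) :
    HasDerivAt (expSmulLp hf) (derivExpSmulLp hf z) z := by
  have hsmall : ∀ᶠ h : ℂ in 𝓝 0, ‖h‖ * ω ≤ 1 := by
    have : Tendsto (fun h : ℂ => ‖h‖ * ω) (𝓝 0) (𝓝 0) := by
      simpa using ((continuous_norm (E := ℂ)).mul_const ω).tendsto 0
    exact this.eventually (eventually_le_nhds zero_lt_one)
  refine hasDerivAt_of_eventually_norm_sub_sub_le_sq (C := Real.exp (ω * |z.im|) * ω ^ 2 * ‖f‖) ?_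
  filter_upwards [hsmall] with h hh
  exact (norm_expSmulLp_add_sub_sub_le hf z h hh).trans_eq (by ring)

theorem differentiable_expSmulLp [Fact (1 ≤ p)] : Differentiable ℂ (expSmulLp hf) :=
  fun z => (hasDerivAt_expSmulLp hf z).differentiableAt

end ExpSmul

section ExponentialWeight

variable {F : Type*} [NormedAddCommGroup F] {μ : Measure ℝ} {p : ℝ≥0∞}

theorem eLpNorm_restrict_Ici_le_of_norm_eq_exp_mul {f g : ℝ → F} {s : ℝ} (hs : 0 ≤ s) (a : ℝ)
    (hg : ∀ᵐ x ∂μ, ‖g x‖ = Real.exp (s * x) * ‖f x‖) :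
    eLpNorm f p (μ.restrict (Set.Ici a))
      ≤ ENNReal.ofReal (Real.exp (-(s * a))) * eLpNorm g p μ :=
  calc eLpNorm f p (μ.restrict (Set.Ici a))
      ≤ ENNReal.ofReal (Real.exp (-(s * a))) * eLpNorm g p (μ.restrict (Set.Ici a)) := by
        refine eLpNorm_le_mul_eLpNorm_of_ae_le_mul ?_ p
        filter_upwards [ae_restrict_mem measurableSet_Ici, ae_restrict_of_ae hg] with x hx hgx
        rw [hgx, ← mul_assoc, ← Real.exp_add]
        exact le_mul_of_one_le_left (norm_nonneg _)
          (Real.one_le_exp (by nlinarith [Set.mem_Ici.1 hx]))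
    _ ≤ ENNReal.ofReal (Real.exp (-(s * a))) * eLpNorm g p μ := by
        gcongr; exact Measure.restrict_le_self

theorem eLpNorm_restrict_Ici_eq_zero_of_norm_exp_mul_le (f : Lp F p μ) (g : ℝ → Lp F p μ)
    {ω ε : ℝ} (hε : 0 < ε) (hg : ∀ s, ∀ᵐ x ∂μ, ‖g s x‖ = Real.exp (s * x) * ‖f x‖)
    (hbound : ∀ s, 0 < s → ‖g s‖ ≤ Real.exp (s * ω) * ‖f‖) :
    eLpNorm f p (μ.restrict (Set.Ici (ω + ε))) = 0 := by
  have hdecay : ∀ s, 0 < s →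
      eLpNorm f p (μ.restrict (Set.Ici (ω + ε))) ≤ ENNReal.ofReal (Real.exp (-(s * ε)) * ‖f‖) := by
    intro s hs
    calc eLpNorm f p (μ.restrict (Set.Ici (ω + ε)))
        ≤ ENNReal.ofReal (Real.exp (-(s * (ω + ε)))) * eLpNorm (g s) p μ :=
          eLpNorm_restrict_Ici_le_of_norm_eq_exp_mul hs.le _ (hg s)
      _ = ENNReal.ofReal (Real.exp (-(s * (ω + ε)))) * ENNReal.ofReal ‖g s‖ := by
          rw [Lp.norm_def, ENNReal.ofReal_toReal (Lp.eLpNorm_ne_top _)]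
      _ ≤ ENNReal.ofReal (Real.exp (-(s * (ω + ε)))) * ENNReal.ofReal (Real.exp (s * ω) * ‖f‖) := by
          gcongr
          exact hbound s hs
      _ = ENNReal.ofReal (Real.exp (-(s * ε)) * ‖f‖) := by
          rw [← ENNReal.ofReal_mul (Real.exp_pos _).le, ← mul_assoc, ← Real.exp_add]
          ring_nf
  have htendsto : Tendsto (fun s => ENNReal.ofReal (Real.exp (-(s * ε)) * ‖f‖)) atTop (𝓝 0) := by
    simpa using ENNReal.tendsto_ofReal
      ((Real.tendsto_exp_neg_atTop_nhds_zero.comp (tendsto_id.atTop_mul_const hε)).mul_const ‖f‖)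
  exact le_antisymm (ge_of_tendsto htendsto ((eventually_gt_atTop 0).mono hdecay)) bot_le

theorem ae_eq_zero_of_norm_exp_mul_le (hp : p ≠ 0) (f : Lp F p μ) (g : ℝ → Lp F p μ) {ω : ℝ}
    (hg : ∀ s, ∀ᵐ x ∂μ, ‖g s x‖ = Real.exp (s * x) * ‖f x‖)
    (hbound : ∀ s, 0 < s → ‖g s‖ ≤ Real.exp (s * ω) * ‖f‖) :
    ∀ᵐ x ∂μ, ω < x → f x = 0 := by
  have hIci : ∀ n : ℕ, ∀ᵐ x ∂μ, x ∈ Set.Ici (ω + 1 / (n + 1)) → f x = 0 := fun n =>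
    (ae_restrict_iff' measurableSet_Ici).1 <|
      (eLpNorm_eq_zero_iff (Lp.aestronglyMeasurable f).restrict hp).1 <|
        eLpNorm_restrict_Ici_eq_zero_of_norm_exp_mul_le f g Nat.one_div_pos_of_nat hg hbound
  filter_upwards [ae_all_iff.2 hIci] with x hx hωx
  obtain ⟨n, hn⟩ := exists_nat_one_div_lt (sub_pos.2 hωx)
  exact hx n (by rw [Set.mem_Ici]; linarith)

end ExponentialWeight

theorem mem_PW_iff_entire_schrodinger_solution_general
    (μ : Measure ℝ) (hμ : μ (Set.Iio 0) = 0)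
    (ω : ℝ) (f : Lp E 2 μ) :
    f ∈ PW (E := E) μ ω ↔
      ∃ u : ℂ → Lp E 2 μ,
        (∀ z : ℂ, ((u z : Lp E 2 μ) : ℝ → E) =ᵐ[μ]
          fun x : ℝ => Complex.exp (Complex.I * z * x) • f x) ∧
        Differentiable ℂ u ∧
        (∀ t : ℝ, u (t : ℂ) = Ugrp μ t f) ∧
        ∀ z : ℂ, ‖u z‖ ≤ Real.exp (ω * |z.im|) * ‖f‖ := by
  constructor
  · intro hf
    have hsupp : ∀ᵐ x ∂μ, x ∉ Metric.closedBall 0 ω → f x = 0 := by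
      have hnonneg : ∀ᵐ x ∂μ, 0 ≤ x := by rw [ae_iff]; simp only [not_le]; exact hμ
      filter_upwards [hnonneg, hf] with x hx₀ hxω hx
      rw [mem_closedBall_zero_iff, Real.norm_eq_abs, abs_of_nonneg hx₀, not_le] at hx
      exact hxω hx
    refine ⟨expSmulLp hsupp, coeFn_expSmulLp hsupp, differentiable_expSmulLp hsupp, fun t => ?_,
      norm_expSmulLp_le hsupp⟩
    exact Lp.ext ((coeFn_expSmulLp hsupp t).trans (MemLp.coeFn_toLp (memLp_U μ t f)).symm)
  · rintro ⟨u, hu, -, -, hbound⟩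
    refine ae_eq_zero_of_norm_exp_mul_le two_ne_zero f (fun s => u (-s * I))
      (fun s => ?_) (fun s hs => ?_)
    · filter_upwards [hu (-s * I)] with x hx
      rw [hx, norm_smul, norm_exp]
      congr 2
      simp
    · simpa [abs_of_pos hs, mul_comm] using hbound (-s * I)

/-- Let `ω > 0`. A vector `f ∈ H` belongs to `PW_ω(D)` if and only if: for every
`z ∈ ℂ` the function `λ ↦ e^{izλ} f(λ)` belongs to `H`, the resulting `H`-valued function
`u(z) = (λ ↦ e^{izλ} f(λ))` is entire, `u(t) = e^{itD} f` for real `t`, and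
`‖u(z)‖ ≤ e^{ω |Im z|} ‖f‖` for all `z ∈ ℂ`. -/
theorem mem_PW_iff_entire_schrodinger_solution
    (μ : Measure ℝ) [SigmaFinite μ] (hμ : μ (Set.Iio 0) = 0)
    (ω : ℝ) (hω : 0 < ω) (f : Lp E 2 μ) :
    f ∈ PW (E := E) μ ω ↔
      ∃ u : ℂ → Lp E 2 μ,
        (∀ z : ℂ, ((u z : Lp E 2 μ) : ℝ → E) =ᵐ[μ]
          fun x : ℝ => Complex.exp (Complex.I * z * x) • f x) ∧
        Differentiable ℂ u ∧
        (∀ t : ℝ, u (t : ℂ) = Ugrp μ t f) ∧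
        ∀ z : ℂ, ‖u z‖ ≤ Real.exp (ω * |z.im|) * ‖f‖ :=
  mem_PW_iff_entire_schrodinger_solution_general μ hμ ω f
end

section
/- For every integer m ≥ 1 and every pair 0 ≤ k ≤ m there is a constant C(m,k) > 0 such that for every ω > 0 there exists a bounded linear operator Q : H → H with range contained in PW_ω(D) satisfying ‖Q f − f‖ ≤ ( C(m,k) / ω^k ) Ω_{m−k}(D^k f, 1/ω) for every f ∈ Dom(D^k); consequently E(f,ω) ≤ ( C(m,k) / ω^k ) Ω_{m−k}(D^k f, 1/ω). -/
open MeasureTheory Complex Filter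
open scoped ENNReal Real

set_option linter.unusedSectionVars false

variable {E : Type*} [NormedAddCommGroup E] [InnerProductSpace ℂ E]
  [CompleteSpace E] [SecondCountableTopology E]

/-- The best approximation `E(f, ω) = inf { ‖f - g‖ : g ∈ PW_ω(D) }`. -/
noncomputable def bestApprox (μ : Measure ℝ) (f : Lp E 2 μ) (ω : ℝ) : ℝ :=
  ⨅ g : PW (E := E) μ ω, ‖f - (g : Lp E 2 μ)‖

/-- The difference operator `Δ^m_τ = (e^{iτD} - I)^m`. -/
noncomputable def Delta (μ : Measure ℝ) (τ : ℝ) : ℕ → Lp E 2 μ → Lp E 2 μ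
  | 0, f => f
  | (m + 1), f => Ugrp μ τ (Delta μ τ m f) - Delta μ τ m f

/-- The modulus of continuity `Ω_m(f, s) = sup_{|τ| ≤ s} ‖Δ^m_τ f‖`. -/
noncomputable def Omega (μ : Measure ℝ) (m : ℕ) (f : Lp E 2 μ) (s : ℝ) : ℝ :=
  ⨆ τ : {τ : ℝ // |τ| ≤ s}, ‖Delta μ τ.1 m f‖

/-!
Take for `Q` the spectral cut-off `f ↦ 1_{λ ≤ ω} f`. Then `‖Q f - f‖²` is the mass of `f` on
`λ > ω`, where `λ ^ k ≥ ω ^ k`, so it suffices to bound the mass of `g = D^k f` there. Since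
`‖Δ^n_τ g‖² = ∫ |e^{iτλ} - 1|^{2n} ‖g λ‖² dμ(λ)`, averaging over `τ ∈ (0, 1/ω]` and exchanging the
integrals reduces this to a lower bound for the integral of `u ↦ |e^{iu} - 1|^{2n}` over `[0, T]`
with `T = λ / ω ≥ 1`, which by `2π`-periodicity is at least a fixed fraction of `T`.
-/

open Set intervalIntegral

noncomputable def diffSymbol (n : ℕ) (u : ℝ) : ℝ := ‖cexp (I * u) - 1‖ ^ (2 * n)

lemma diffSymbol_nonneg (n : ℕ) (u : ℝ) : 0 ≤ diffSymbol n u := by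
  unfold diffSymbol; positivity

@[fun_prop]
lemma continuous_diffSymbol (n : ℕ) : Continuous (diffSymbol n) := by
  unfold diffSymbol; fun_prop

lemma periodic_diffSymbol (n : ℕ) : Function.Periodic (diffSymbol n) (2 * π) := by
  intro u
  have h := exp_mul_I_periodic u
  simp only at h
  simp only [diffSymbol, mul_comm I]
  push_cast
  rw [h]

lemma diffSymbol_pos (n : ℕ) {u : ℝ} (h₀ : 0 < u) (h₁ : u < 2 * π) : 0 < diffSymbol n u := by
  rw [diffSymbol, norm_exp_I_mul_ofReal_sub_one]
  have := Real.sin_pos_of_pos_of_lt_pi (x := u / 2) (by linarith) (by linarith)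
  exact pow_pos (norm_pos_iff.mpr (by positivity)) _

lemma intervalIntegrable_diffSymbol (n : ℕ) (a b : ℝ) :
    IntervalIntegrable (diffSymbol n) volume a b :=
  (continuous_diffSymbol n).intervalIntegrable a b

noncomputable def symbolConst (n : ℕ) : ℝ := (∫ u in 0..1, diffSymbol n u) / (4 * π)

lemma symbolConst_pos (n : ℕ) : 0 < symbolConst n := by
  have : 0 < ∫ u in 0..1, diffSymbol n u :=
    intervalIntegral_pos_of_pos_on (intervalIntegrable_diffSymbol n 0 1)
      (fun u hu => diffSymbol_pos n hu.1 (by linarith [hu.2, Real.pi_gt_three])) one_pos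
  unfold symbolConst
  positivity

lemma integral_diffSymbol_mono (n : ℕ) {a b : ℝ} (ha : 0 ≤ a) (hab : a ≤ b) :
    ∫ u in 0..a, diffSymbol n u ≤ ∫ u in 0..b, diffSymbol n u :=
  integral_mono_interval le_rfl ha hab (.of_forall (diffSymbol_nonneg n))
    (intervalIntegrable_diffSymbol n 0 b)

/-- On `[0, T]` with `T ≥ 1` there is the initial piece `[0, 1]` and `⌊T / 2π⌋` full periods;
together they account for a fixed fraction of `T`. -/
lemma symbolConst_mul_le_integral (n : ℕ) {T : ℝ} (hT : 1 ≤ T) :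
    symbolConst n * T ≤ ∫ u in 0..T, diffSymbol n u := by
  set c := ∫ u in 0..1, diffSymbol n u
  set N := ⌊T / (2 * π)⌋
  have hπ : 1 ≤ 2 * π := by linarith [Real.pi_gt_three]
  have hc : 0 ≤ c := integral_nonneg zero_le_one fun u _ => diffSymbol_nonneg n u
  have hN : 0 ≤ (N : ℝ) := by exact_mod_cast Int.floor_nonneg.mpr (by positivity)
  have h_init : c ≤ ∫ u in 0..T, diffSymbol n u := integral_diffSymbol_mono n zero_le_one hT
  have h_periods : N • (∫ u in 0..2 * π, diffSymbol n u) ≤ ∫ u in 0..T, diffSymbol n u := by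
    have h_inf : 0 ≤ sInf ((fun t => ∫ u in 0..t, diffSymbol n u) '' Icc 0 (2 * π)) :=
      Real.sInf_nonneg <| forall_mem_image.mpr fun t ht =>
        integral_nonneg ht.1 fun u _ => diffSymbol_nonneg n u
    linarith [(periodic_diffSymbol n).sInf_add_zsmul_le_integral_of_pos
      (intervalIntegrable_diffSymbol n 0 _) (by positivity) T]
  have h_period : N * c ≤ N • ∫ u in 0..2 * π, diffSymbol n u := by
    rw [zsmul_eq_mul]
    exact mul_le_mul_of_nonneg_left (integral_diffSymbol_mono n zero_le_one hπ) hN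
  have h_count : c * (T / (2 * π)) ≤ c * (N + 1) :=
    mul_le_mul_of_nonneg_left (Int.lt_floor_add_one _).le hc
  calc symbolConst n * T = c * (T / (2 * π)) / 2 := by
        unfold symbolConst; field_simp; ring
    _ ≤ ∫ u in 0..T, diffSymbol n u := by linarith

lemma symbolConst_mul_le_integral_comp_mul (n : ℕ) {s x : ℝ} (hs : 0 < s) (hxs : 1 ≤ x * s) :
    symbolConst n * s ≤ ∫ τ in 0..s, diffSymbol n (τ * x) := by
  have hx : 0 < x := pos_of_mul_pos_left (by linarith) hs.le
  rw [integral_comp_mul_right _ hx.ne', zero_mul, smul_eq_mul, ← div_eq_inv_mul,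
    le_div_iff₀ hx, mul_assoc]
  exact symbolConst_mul_le_integral n (by linarith)

section Difference

variable (μ : Measure ℝ)

lemma coeFn_Ugrp (t : ℝ) (f : Lp E 2 μ) :
    Ugrp μ t f =ᵐ[μ] fun x => cexp (I * t * x) • f x :=
  MemLp.coeFn_toLp _

lemma norm_Ugrp (t : ℝ) (f : Lp E 2 μ) : ‖Ugrp μ t f‖ = ‖f‖ := by
  rw [Ugrp, Lp.norm_toLp, Lp.norm_def]
  congr 1
  refine eLpNorm_congr_norm_ae (.of_forall fun x => ?_)
  rw [norm_smul, mul_assoc, ← ofReal_mul, norm_exp_I_mul_ofReal, one_mul]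

lemma norm_Delta_le (τ : ℝ) (n : ℕ) (f : Lp E 2 μ) : ‖Delta μ τ n f‖ ≤ 2 ^ n * ‖f‖ := by
  induction n with
  | zero => simp [Delta]
  | succ n ih =>
    calc ‖Delta μ τ (n + 1) f‖ ≤ ‖Ugrp μ τ (Delta μ τ n f)‖ + ‖Delta μ τ n f‖ := norm_sub_le _ _
      _ = 2 * ‖Delta μ τ n f‖ := by rw [norm_Ugrp]; ring
      _ ≤ 2 ^ (n + 1) * ‖f‖ := by rw [pow_succ']; linarith

lemma Omega_nonneg (n : ℕ) (f : Lp E 2 μ) (s : ℝ) : 0 ≤ Omega μ n f s :=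
  Real.iSup_nonneg fun _ => norm_nonneg _

lemma norm_Delta_le_Omega (n : ℕ) (f : Lp E 2 μ) {s τ : ℝ} (hτ : |τ| ≤ s) :
    ‖Delta μ τ n f‖ ≤ Omega μ n f s :=
  le_ciSup (f := fun τ : {τ : ℝ // |τ| ≤ s} => ‖Delta μ τ.1 n f‖)
    ⟨2 ^ n * ‖f‖, forall_mem_range.mpr fun σ => norm_Delta_le μ σ.1 n f⟩ ⟨τ, hτ⟩

lemma coeFn_Delta (τ : ℝ) (n : ℕ) (f : Lp E 2 μ) :
    Delta μ τ n f =ᵐ[μ] fun x => (cexp (I * τ * x) - 1) ^ n • f x := by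
  induction n with
  | zero => exact .of_forall fun x => by simp [Delta]
  | succ n ih =>
    filter_upwards [Lp.coeFn_sub (Ugrp μ τ (Delta μ τ n f)) (Delta μ τ n f),
      coeFn_Ugrp μ τ (Delta μ τ n f), ih] with x h_sub h_U h_n
    rw [Delta, h_sub, Pi.sub_apply, h_U, h_n, smul_smul, ← sub_smul, pow_succ']
    congr 1
    ring

lemma enorm_sq_eq_lintegral {F : Type*} [NormedAddCommGroup F] (f : Lp F 2 μ) :
    ‖f‖ₑ ^ 2 = ∫⁻ x, ‖f x‖ₑ ^ 2 ∂μ := by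
  simpa [Lp.enorm_def] using eLpNorm_nnreal_pow_eq_lintegral (μ := μ) (f := f) (p := 2) two_ne_zero

lemma enorm_Delta_sq (τ : ℝ) (n : ℕ) (f : Lp E 2 μ) :
    ‖Delta μ τ n f‖ₑ ^ 2 = ∫⁻ x, ENNReal.ofReal (diffSymbol n (τ * x)) * ‖f x‖ₑ ^ 2 ∂μ := by
  rw [enorm_sq_eq_lintegral]
  refine lintegral_congr_ae ((coeFn_Delta μ τ n f).mono fun x hx => ?_)
  dsimp only
  rw [hx, enorm_smul, mul_pow, diffSymbol, ENNReal.ofReal_pow (norm_nonneg _), ofReal_norm,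
    ofReal_mul, ← mul_assoc, enorm_pow, ← pow_mul, mul_comm n 2]

end Difference

section Averaging

variable (μ : Measure ℝ) [SFinite μ]

lemma setLIntegral_enorm_Delta_sq (n : ℕ) (f : Lp E 2 μ) (s : ℝ) :
    ∫⁻ τ in Ioc 0 s, ‖Delta μ τ n f‖ₑ ^ 2 =
      ∫⁻ x, (∫⁻ τ in Ioc 0 s, ENNReal.ofReal (diffSymbol n (τ * x))) * ‖f x‖ₑ ^ 2 ∂μ := by
  simp_rw [enorm_Delta_sq]
  rw [lintegral_lintegral_swap]
  · exact lintegral_congr fun x => lintegral_mul_const'' _ (by fun_prop)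
  · refine AEMeasurable.mul (f := fun p : ℝ × ℝ => ENNReal.ofReal (diffSymbol n (p.1 * p.2)))
      (by fun_prop) ?_
    exact ((Lp.aestronglyMeasurable f).enorm.pow_const 2).comp_quasiMeasurePreserving
      Measure.quasiMeasurePreserving_snd

lemma ofReal_symbolConst_mul_le_setLIntegral (n : ℕ) {s x : ℝ} (hs : 0 < s) (hxs : 1 ≤ x * s) :
    ENNReal.ofReal (symbolConst n * s) ≤
      ∫⁻ τ in Ioc 0 s, ENNReal.ofReal (diffSymbol n (τ * x)) := by
  rw [← ofReal_integral_eq_lintegral_ofReal (by fun_prop : Continuous _).integrableOn_Ioc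
    (.of_forall fun τ => diffSymbol_nonneg n _), ← integral_of_le hs.le]
  exact ENNReal.ofReal_le_ofReal (symbolConst_mul_le_integral_comp_mul n hs hxs)

lemma ofReal_symbolConst_mul_setLIntegral_Ioi_le (n : ℕ) (f : Lp E 2 μ) {ω s : ℝ} (hs : 0 < s)
    (hωs : 1 ≤ ω * s) :
    ENNReal.ofReal (symbolConst n) * ∫⁻ x in Ioi ω, ‖f x‖ₑ ^ 2 ∂μ ≤
      ENNReal.ofReal (Omega μ n f s) ^ 2 := by
  refine (ENNReal.mul_le_mul_iff_right (by simpa using hs) ENNReal.ofReal_ne_top).mp ?_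
  calc ENNReal.ofReal s * (ENNReal.ofReal (symbolConst n) * ∫⁻ x in Ioi ω, ‖f x‖ₑ ^ 2 ∂μ)
      = ∫⁻ x in Ioi ω, ENNReal.ofReal (symbolConst n * s) * ‖f x‖ₑ ^ 2 ∂μ := by
        rw [lintegral_const_mul' _ _ ENNReal.ofReal_ne_top,
          ENNReal.ofReal_mul (symbolConst_pos n).le]
        ring
    _ ≤ ∫⁻ x in Ioi ω,
          (∫⁻ τ in Ioc 0 s, ENNReal.ofReal (diffSymbol n (τ * x))) * ‖f x‖ₑ ^ 2 ∂μ :=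
        setLIntegral_mono' measurableSet_Ioi fun x hx =>
          mul_le_mul_left (ofReal_symbolConst_mul_le_setLIntegral n hs
            (by nlinarith [mem_Ioi.mp hx])) _
    _ ≤ ∫⁻ x, (∫⁻ τ in Ioc 0 s, ENNReal.ofReal (diffSymbol n (τ * x))) * ‖f x‖ₑ ^ 2 ∂μ :=
        setLIntegral_le_lintegral _ _
    _ = ∫⁻ τ in Ioc 0 s, ‖Delta μ τ n f‖ₑ ^ 2 := (setLIntegral_enorm_Delta_sq μ n f s).symm
    _ ≤ ∫⁻ τ in Ioc 0 s, ENNReal.ofReal (Omega μ n f s) ^ 2 :=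
        setLIntegral_mono' measurableSet_Ioc fun τ hτ => by
          rw [← ofReal_norm]
          gcongr
          exact norm_Delta_le_Omega μ n f (by rw [abs_of_pos hτ.1]; exact hτ.2)
    _ = ENNReal.ofReal s * ENNReal.ofReal (Omega μ n f s) ^ 2 := by
        rw [setLIntegral_const, Real.volume_Ioc, sub_zero, mul_comm]

end Averaging

section LowPass

variable {F : Type*} [NormedAddCommGroup F] [NormedSpace ℂ F] (μ : Measure ℝ) (ω : ℝ)

noncomputable def lowPass : Lp F 2 μ →L[ℂ] Lp F 2 μ :=
  LinearMap.mkContinuous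
    { toFun := fun f => ((Lp.memLp f).indicator measurableSet_Iic).toLp ((Iic ω).indicator f)
      map_add' := fun f g => by
        rw [← MemLp.toLp_add]
        exact MemLp.toLp_congr _ _ <|
          (Lp.coeFn_add f g).indicator.trans (.of_eq (indicator_add' _ _ _))
      map_smul' := fun c f => by
        rw [RingHom.id_apply, ← MemLp.toLp_const_smul]
        exact MemLp.toLp_congr _ _ <|
          (Lp.coeFn_smul c f).indicator.trans (.of_eq (indicator_const_smul _ _ _)) }
    1 fun f => by
      simp only [LinearMap.coe_mk, AddHom.coe_mk, one_mul, Lp.norm_def]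
      rw [eLpNorm_congr_ae (MemLp.coeFn_toLp _)]
      exact ENNReal.toReal_mono (Lp.eLpNorm_ne_top f) (eLpNorm_indicator_le _)

lemma coeFn_lowPass (f : Lp F 2 μ) : lowPass μ ω f =ᵐ[μ] (Iic ω).indicator f := by
  rw [lowPass, LinearMap.mkContinuous_apply, LinearMap.coe_mk, AddHom.coe_mk]
  exact MemLp.coeFn_toLp _

lemma enorm_lowPass_sub_sq (f : Lp F 2 μ) :
    ‖lowPass μ ω f - f‖ₑ ^ 2 = ∫⁻ x in Ioi ω, ‖f x‖ₑ ^ 2 ∂μ := by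
  rw [enorm_sq_eq_lintegral, ← lintegral_indicator measurableSet_Ioi]
  refine lintegral_congr_ae ?_
  filter_upwards [Lp.coeFn_sub (lowPass μ ω f) f, coeFn_lowPass μ ω f] with x h_sub h_low
  rw [h_sub, Pi.sub_apply, h_low]
  by_cases hx : x ≤ ω
  · simp [hx]
  · simp [hx, not_le.mp hx]

end LowPass

lemma lowPass_mem_PW {F : Type*} [NormedAddCommGroup F] [InnerProductSpace ℂ F] (μ : Measure ℝ)
    (ω : ℝ) (f : Lp F 2 μ) : lowPass μ ω f ∈ PW μ ω := by
  filter_upwards [coeFn_lowPass μ ω f] with x hx hωx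
  rw [hx, indicator_of_notMem (notMem_Iic.mpr hωx)]

lemma bestApprox_le_norm_sub (μ : Measure ℝ) (f : Lp E 2 μ) {ω : ℝ} {g : Lp E 2 μ}
    (hg : g ∈ PW μ ω) : bestApprox μ f ω ≤ ‖f - g‖ :=
  ciInf_le ⟨0, forall_mem_range.mpr fun _ => norm_nonneg _⟩ (⟨g, hg⟩ : PW μ ω)

lemma ofReal_pow_sq_mul_setLIntegral_Ioi_le {F : Type*} [NormedAddCommGroup F]
    [NormedSpace ℝ F] (μ : Measure ℝ) (k : ℕ) {ω : ℝ} (hω : 0 ≤ ω) {f g : ℝ → F}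
    (hfg : g =ᵐ[μ] fun x => x ^ k • f x) :
    ENNReal.ofReal (ω ^ k) ^ 2 * ∫⁻ x in Ioi ω, ‖f x‖ₑ ^ 2 ∂μ ≤ ∫⁻ x in Ioi ω, ‖g x‖ₑ ^ 2 ∂μ := by
  rw [← lintegral_const_mul' _ _ (by simp)]
  refine setLIntegral_mono_ae' measurableSet_Ioi (hfg.mono fun x hx hωx => ?_)
  rw [hx, enorm_smul, ← mul_pow, ← ofReal_norm (x ^ k), Real.norm_eq_abs, abs_pow,
    abs_of_pos (hω.trans_lt hωx)]
  gcongr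
  exact hωx.le

lemma norm_lowPass_sub_le (μ : Measure ℝ) [SFinite μ] (n k : ℕ) {ω : ℝ} (hω : 0 < ω)
    (f : Lp E 2 μ) (hf : MemLp (fun x : ℝ => x ^ k • f x) 2 μ) :
    ‖lowPass μ ω f - f‖ ≤ (√(symbolConst n))⁻¹ / ω ^ k * Omega μ n (hf.toLp _) (1 / ω) := by
  set c := symbolConst n
  set Ω := Omega μ n (hf.toLp _) (1 / ω)
  set a := ‖lowPass μ ω f - f‖
  have h_enorm : ENNReal.ofReal c * (ENNReal.ofReal (ω ^ k) * ‖lowPass μ ω f - f‖ₑ) ^ 2 ≤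
      ENNReal.ofReal Ω ^ 2 := by
    rw [mul_pow, enorm_lowPass_sub_sq]
    calc _ ≤ ENNReal.ofReal c * ∫⁻ x in Ioi ω, ‖hf.toLp _ x‖ₑ ^ 2 ∂μ := by
          gcongr
          exact ofReal_pow_sq_mul_setLIntegral_Ioi_le μ k hω.le (MemLp.coeFn_toLp hf)
      _ ≤ ENNReal.ofReal Ω ^ 2 := ofReal_symbolConst_mul_setLIntegral_Ioi_le μ n _
          (one_div_pos.mpr hω) (by rw [mul_one_div_cancel hω.ne'])
  have h_sq : c * (ω ^ k * a) ^ 2 ≤ Ω ^ 2 := by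
    rwa [← ofReal_norm, ← ENNReal.ofReal_mul (by positivity), ← ENNReal.ofReal_pow (by positivity),
      ← ENNReal.ofReal_mul (symbolConst_pos n).le, ← ENNReal.ofReal_pow (Omega_nonneg μ n _ _),
      ENNReal.ofReal_le_ofReal_iff (sq_nonneg _)] at h_enorm
  have h_lin : √c * (ω ^ k * a) ≤ Ω := by
    have := Real.sqrt_le_sqrt h_sq
    rwa [Real.sqrt_mul (symbolConst_pos n).le, Real.sqrt_sq (by positivity),
      Real.sqrt_sq (Omega_nonneg μ n _ _)] at this
  have : 0 < √c := Real.sqrt_pos.mpr (symbolConst_pos n)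
  rw [div_mul_eq_mul_div, le_div_iff₀ (by positivity), inv_mul_eq_div, le_div_iff₀ this]
  linarith

theorem jackson_operator_general
    (μ : Measure ℝ) [SigmaFinite μ]
    (m k : ℕ) :
    ∃ C : ℝ, 0 < C ∧ ∀ ω : ℝ, 0 < ω →
      ∃ Q : Lp E 2 μ →L[ℂ] Lp E 2 μ,
        (∀ f : Lp E 2 μ, Q f ∈ PW (E := E) μ ω) ∧
        ∀ f : Lp E 2 μ, ∀ hf : MemLp (fun x : ℝ => x ^ k • f x) 2 μ,
          ‖Q f - f‖ ≤ C / ω ^ k * Omega μ (m - k) (hf.toLp _) (1 / ω) ∧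
          bestApprox μ f ω ≤ C / ω ^ k * Omega μ (m - k) (hf.toLp _) (1 / ω) := by
  have hC := symbolConst_pos (m - k)
  refine ⟨(√(symbolConst (m - k)))⁻¹, by positivity, fun ω hω => ?_⟩
  refine ⟨lowPass μ ω, lowPass_mem_PW μ ω, fun f hf => ?_⟩
  have h_norm := norm_lowPass_sub_le μ (m - k) k hω f hf
  exact ⟨h_norm, (bestApprox_le_norm_sub μ f (lowPass_mem_PW μ ω f)).trans
    ((norm_sub_rev _ _).trans_le h_norm)⟩

/-- For every integer `m ≥ 1` and every pair `0 ≤ k ≤ m` there is a constant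
`C(m,k) > 0` such that for every `ω > 0` there exists a bounded linear operator `Q : H → H`
with range contained in `PW_ω(D)` satisfying
`‖Q f − f‖ ≤ (C(m,k)/ω^k) Ω_{m−k}(D^k f, 1/ω)` for every `f ∈ Dom(D^k)`; consequently
`E(f,ω) ≤ (C(m,k)/ω^k) Ω_{m−k}(D^k f, 1/ω)`. -/
theorem jackson_operator
    (μ : Measure ℝ) [SigmaFinite μ] (hμ : μ (Set.Iio 0) = 0)
    (m k : ℕ) (hm : 1 ≤ m) (hk : k ≤ m) :
    ∃ C : ℝ, 0 < C ∧ ∀ ω : ℝ, 0 < ω →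
      ∃ Q : Lp E 2 μ →L[ℂ] Lp E 2 μ,
        (∀ f : Lp E 2 μ, Q f ∈ PW (E := E) μ ω) ∧
        ∀ f : Lp E 2 μ, ∀ hf : MemLp (fun x : ℝ => x ^ k • f x) 2 μ,
          ‖Q f - f‖ ≤ C / ω ^ k * Omega μ (m - k) (hf.toLp _) (1 / ω) ∧
          bestApprox μ f ω ≤ C / ω ^ k * Omega μ (m - k) (hf.toLp _) (1 / ω) :=
  jackson_operator_general μ m k
end
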